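/- arXiv:2109.10049 — 9 statements merged into one kernel-verified Lean document; each statement's English description precedes it below -/
import Mathlib

section
/- For the TopK operator on ℝ^d with 1 ≤ K ≤ d, which keeps the K largest-magnitude coordinates of x and sets the rest to zero, the inequality ‖TopK(x) − x‖² ≤ (1 − K/d)‖x‖² holds for all x ∈ ℝ^d. -/
/-- The TopK operator (keeping the `K` largest-magnitude coordinates, via a sorting
permutation `π`) satisfies `‖TopK(x) − x‖² ≤ (1 − K/d)‖x‖²`. -/
theorem topK_contraction {d : ℕ} (K : ℕ) (hK1 : 1 ≤ K) (hKd : K ≤ d)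
    (x : EuclideanSpace ℝ (Fin d)) (π : Equiv.Perm (Fin d))
    (hsort : ∀ i j : Fin d, i ≤ j → |x (π j)| ≤ |x (π i)|)
    (topKx : EuclideanSpace ℝ (Fin d))
    (htopK : ∀ j : Fin d, topKx j = if ((π.symm j : Fin d) : ℕ) < K then x j else 0) :
    ‖topKx - x‖ ^ 2 ≤ (1 - (K : ℝ) / d) * ‖x‖ ^ 2 := by
  have hd : 0 < d := lt_of_lt_of_le hK1 hKd
  have hdR : (0:ℝ) < d := by exact_mod_cast hd
  set f : Fin d → ℝ := fun i => x (π i) ^ 2 with hf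
  have hfnn : ∀ i, 0 ≤ f i := fun i => sq_nonneg _
  -- norm formulas
  have hx : ‖x‖ ^ 2 = ∑ j, x j ^ 2 := by
    rw [EuclideanSpace.norm_eq, Real.sq_sqrt (Finset.sum_nonneg fun i _ => sq_nonneg _)]
    simp [Real.norm_eq_abs, sq_abs]
  have hdiff : ‖topKx - x‖ ^ 2 = ∑ j, (topKx j - x j) ^ 2 := by
    rw [EuclideanSpace.norm_eq, Real.sq_sqrt (Finset.sum_nonneg fun i _ => sq_nonneg _)]
    simp [Real.norm_eq_abs, sq_abs]
  have h1 : ∀ j, (topKx j - x j) ^ 2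
      = if ((π.symm j : Fin d) : ℕ) < K then 0 else x j ^ 2 := by
    intro j; rw [htopK j]; split <;> ring
  -- rewrite diff sum via permutation
  have h2 : ∑ j, (topKx j - x j) ^ 2 = ∑ i : Fin d, (if (i : ℕ) < K then 0 else f i) := by
    rw [Finset.sum_congr rfl fun j _ => h1 j]
    rw [← Equiv.sum_comp π (fun j => if ((π.symm j : Fin d) : ℕ) < K then 0 else x j ^ 2)]
    simp [hf]
  have hxS : ∑ j, x j ^ 2 = ∑ i, f i := by
    rw [← Equiv.sum_comp π (fun j => x j ^ 2)]
  set head := Finset.univ.filter (fun i : Fin d => (i : ℕ) < K) with hhead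
  set tail := Finset.univ.filter (fun i : Fin d => ¬ (i : ℕ) < K) with htail
  have hcardhead : head.card = K := by
    have : head = Finset.univ.map (Fin.castLEEmb hKd) := by
      ext i
      simp only [hhead, Finset.mem_filter, Finset.mem_univ, true_and, Finset.mem_map]
      constructor
      · intro h; exact ⟨⟨(i : ℕ), h⟩, rfl⟩
      · rintro ⟨a, rfl⟩; exact a.isLt
    rw [this, Finset.card_map, Finset.card_univ, Fintype.card_fin]
  have hcardtail : tail.card = d - K := by
    have := Finset.card_filter_add_card_filter_not
      (s := (Finset.univ : Finset (Fin d))) (p := fun i : Fin d => (i : ℕ) < K)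
    rw [Finset.card_univ, Fintype.card_fin] at this
    rw [htail]
    rw [hhead] at hcardhead
    omega
  set T := ∑ i ∈ tail, f i with hT
  set H := ∑ i ∈ head, f i with hH
  have hS : ∑ i, f i = H + T := by
    rw [hH, hT, hhead, htail, Finset.sum_filter_add_sum_filter_not]
  -- every tail term ≤ every head term
  have hkey : ∀ i ∈ tail, ∀ j ∈ head, f i ≤ f j := by
    intro i hi j hj
    rw [htail, Finset.mem_filter] at hi
    rw [hhead, Finset.mem_filter] at hj
    have hij : j ≤ i := by
      have : (j : ℕ) ≤ (i : ℕ) := by omega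
      exact this
    have := hsort j i hij
    calc f i = |x (π i)| ^ 2 := by rw [sq_abs]
      _ ≤ |x (π j)| ^ 2 := by
          exact pow_le_pow_left₀ (abs_nonneg _) this 2
      _ = f j := by rw [sq_abs]
  -- K * T ≤ (d - K) * H
  have hKT : (K : ℝ) * T ≤ ((d - K : ℕ) : ℝ) * H := by
    have step : ∀ j ∈ head, T ≤ ((d - K : ℕ) : ℝ) * f j := by
      intro j hj
      calc T = ∑ i ∈ tail, f i := hT
        _ ≤ ∑ _i ∈ tail, f j := Finset.sum_le_sum (fun i hi => hkey i hi j hj)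
        _ = ((d - K : ℕ) : ℝ) * f j := by
            rw [Finset.sum_const, hcardtail, nsmul_eq_mul]
    calc (K : ℝ) * T = ∑ _j ∈ head, T := by
          rw [Finset.sum_const, hcardhead, nsmul_eq_mul]
      _ ≤ ∑ j ∈ head, ((d - K : ℕ) : ℝ) * f j := Finset.sum_le_sum step
      _ = ((d - K : ℕ) : ℝ) * H := by rw [← Finset.mul_sum]
  have hTnn : 0 ≤ T := Finset.sum_nonneg fun i _ => hfnn i
  have hHnn : 0 ≤ H := Finset.sum_nonneg fun i _ => hfnn i
  -- finish
  have hTsum : ∑ i : Fin d, (if (i : ℕ) < K then 0 else f i) = T := by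
    rw [hT, htail, Finset.sum_filter]
    apply Finset.sum_congr rfl
    intro i _
    by_cases h : (i : ℕ) < K <;> simp [h]
  have hdK : ((d - K : ℕ) : ℝ) = (d : ℝ) - K := by
    push_cast [Nat.cast_sub hKd]
    ring
  rw [hdK] at hKT
  rw [hdiff, h2, hTsum, hx, hxS, hS]
  have h3 : (1 - (K : ℝ)/d) * (H + T) = ((d : ℝ) * (H + T) - K * (H + T))/d := by
    field_simp
  rw [h3, le_div_iff₀ hdR]
  have hKdR : (K : ℝ) ≤ d := by exact_mod_cast hKd
  nlinarith [hKT, hTnn, hHnn]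
end

section
/- Under the same setting, if additionally f is L_f-smooth, then E‖(1/n)∑_{τ=1}^n (∇f_{i_k^τ}^{(τ)}(x^k) − ∇f_{i_k^τ}^{(τ)}(w^k))‖² ≤ 4(L_f + L/n)[P(x^k) − P(x*)] + 4(L_f + L/n)[P(w^k) − P(x*)], where the indices i_k^τ are sampled uniformly and independently from [m] for each τ. -/
/-!
Write `D_h(y, z) = h y - h z - ⟪∇h z, y - z⟫`. For convex `h` with `L`-Lipschitz gradient,
co-coercivity `‖∇h x - ∇h y‖² ≤ 2L D_h(x, y)` follows by evaluating both the descent bound at `x`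
and the tangent plane at `y` at the point `x - (∇h x - ∇h y) / L`.

For independent uniform indices, the second moment of a sum is at most the squared norm of its
mean plus the sum of the individual second moments. For the averaged gradient difference at `y`
against `x*` the mean is `∇f y - ∇f x*`, so co-coercivity of `f` bounds the first part by
`2 L_f D_f(y, x*)`, and co-coercivity of every `f_i^(τ)` bounds the second by `(2L/n) D_f(y, x*)`.
Optimality of `x*` for `f + ψ` gives `D_f(y, x*) ≤ P y - P x*`, and
`‖a - b‖² ≤ 2‖a - c‖² + 2‖b - c‖²`, with `c` the gradients at `x*`, combines `x^k` and `w^k`.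
-/

open Finset
open scoped InnerProductSpace NNReal

theorem IsMinOn.nonneg_of_hasDerivAt_Icc {φ : ℝ → ℝ} {φ' a b : ℝ} (hab : a < b)
    (hmin : IsMinOn φ (Set.Icc a b) a) (hφ : HasDerivAt φ φ' a) : 0 ≤ φ' := by
  have hcone : b - a ∈ posTangentConeAt (Set.Icc a b) a :=
    sub_mem_posTangentConeAt_of_segment_subset (segment_eq_Icc hab.le).subset
  have h : 0 ≤ (b - a) * φ' := by
    simpa using hmin.localize.hasFDerivWithinAt_nonneg hφ.hasFDerivAt.hasFDerivWithinAt hcone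
  exact (mul_nonneg_iff_of_pos_left (sub_pos.2 hab)).1 h

theorem convexOn_sum {E ι : Type*} [AddCommGroup E] [Module ℝ E] {s : Set E} (hs : Convex ℝ s)
    (t : Finset ι) {f : ι → E → ℝ} (h : ∀ i ∈ t, ConvexOn ℝ s (f i)) :
    ConvexOn ℝ s (∑ i ∈ t, f i) :=
  Finset.sum_induction _ _ (fun _ _ => ConvexOn.add) (convexOn_const 0 hs) h

section InnerProduct

variable {H : Type*} [NormedAddCommGroup H] [InnerProductSpace ℝ H]

theorem ConvexOn.apply_add_smul_sub_le {f : H → ℝ} (hf : ConvexOn ℝ Set.univ f) (x y : H) {t : ℝ}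
    (ht : t ∈ Set.Icc (0 : ℝ) 1) : f (x + t • (y - x)) ≤ f x + t * (f y - f x) := by
  have h := hf.2 (Set.mem_univ x) (Set.mem_univ y) (sub_nonneg.2 ht.2) ht.1 (sub_add_cancel 1 t)
  have e : (1 - t) • x + t • y = x + t • (y - x) := by module
  rw [e, smul_eq_mul, smul_eq_mul] at h
  linarith

theorem norm_sub_sq_le_two_mul_add_two_mul (a b c : H) :
    ‖a - b‖ ^ 2 ≤ 2 * ‖a - c‖ ^ 2 + 2 * ‖b - c‖ ^ 2 := by
  have h := parallelogram_law_with_norm ℝ (a - c) (b - c)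
  rw [sub_sub_sub_cancel_right] at h
  linarith [sq_nonneg ‖a - c + (b - c)‖]

def bregmanDiv (f : H → ℝ) (gf : H → H) (x y : H) : ℝ := f x - f y - ⟪gf y, x - y⟫_ℝ

theorem bregmanDiv_sum {ι : Type*} (s : Finset ι) (f : ι → H → ℝ) (g : ι → H → H) (x y : H) :
    bregmanDiv (∑ i ∈ s, f i) (∑ i ∈ s, g i) x y = ∑ i ∈ s, bregmanDiv (f i) (g i) x y := by
  simp [bregmanDiv, sum_inner, sum_sub_distrib]

theorem bregmanDiv_smul (c : ℝ) (f : H → ℝ) (g : H → H) (x y : H) :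
    bregmanDiv (c • f) (c • g) x y = c * bregmanDiv f g x y := by
  simp only [bregmanDiv, Pi.smul_apply, smul_eq_mul, real_inner_smul_left]
  ring

variable [CompleteSpace H]

theorem HasGradientAt.hasDerivAt_comp_add_smul {f : H → ℝ} {g a v : H} {t : ℝ}
    (hf : HasGradientAt f g (a + t • v)) :
    HasDerivAt (fun s : ℝ => f (a + s • v)) ⟪g, v⟫_ℝ t := by
  have hline : HasDerivAt (fun s : ℝ => a + s • v) v t := by
    simpa using ((hasDerivAt_id t).smul_const v).const_add a
  have := (hasGradientAt_iff_hasFDerivAt.mp hf).comp_hasDerivAt t hline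
  simpa [Function.comp_def] using this

theorem HasGradientAt.sum {ι : Type*} (s : Finset ι) {f : ι → H → ℝ} {g : ι → H} {x : H}
    (h : ∀ i ∈ s, HasGradientAt (f i) (g i) x) :
    HasGradientAt (∑ i ∈ s, f i) (∑ i ∈ s, g i) x := by
  rw [hasGradientAt_iff_hasFDerivAt, map_sum]
  exact HasFDerivAt.sum fun i hi => (h i hi).hasFDerivAt

theorem HasGradientAt.const_smul {f : H → ℝ} {g x : H} (h : HasGradientAt f g x) (c : ℝ) :
    HasGradientAt (c • f) (c • g) x := by
  rw [hasGradientAt_iff_hasFDerivAt]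
  simpa using h.hasFDerivAt.const_smul c

theorem ConvexOn.add_inner_le {f : H → ℝ} {g x : H} (hf : ConvexOn ℝ Set.univ f)
    (hg : HasGradientAt f g x) (y : H) : f x + ⟪g, y - x⟫_ℝ ≤ f y := by
  set φ : ℝ → ℝ := fun t => t * (f y - f x) - f (x + t • (y - x))
  have hmin : IsMinOn φ (Set.Icc 0 1) 0 := fun t ht => by
    have := hf.apply_add_smul_sub_le x y ht
    simp only [Set.mem_ofPred_eq, φ, zero_mul, zero_smul, add_zero]
    linarith
  have hφ : HasDerivAt φ ((f y - f x) - ⟪g, y - x⟫_ℝ) 0 := by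
    have hg' : HasGradientAt f g (x + (0 : ℝ) • (y - x)) := by simpa using hg
    exact (((hasDerivAt_id (0 : ℝ)).mul_const (f y - f x)).fun_sub
      hg'.hasDerivAt_comp_add_smul).congr_deriv (by simp)
  linarith [hmin.nonneg_of_hasDerivAt_Icc zero_lt_one hφ]

theorem LipschitzWith.le_add_inner_add_sq {K : ℝ≥0} {f : H → ℝ} {gf : H → H}
    (hg : ∀ x, HasGradientAt f (gf x) x) (hlip : LipschitzWith K gf) (a v : H) :
    f (a + v) ≤ f a + ⟪gf a, v⟫_ℝ + K / 2 * ‖v‖ ^ 2 := by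
  set φ : ℝ → ℝ := fun t => f (a + t • v) - t * ⟪gf a, v⟫_ℝ - K / 2 * t ^ 2 * ‖v‖ ^ 2
  have hφ : ∀ t, HasDerivAt φ (⟪gf (a + t • v), v⟫_ℝ - ⟪gf a, v⟫_ℝ - K * t * ‖v‖ ^ 2) t := by
    intro t
    exact ((((hg (a + t • v)).hasDerivAt_comp_add_smul).fun_sub
      ((hasDerivAt_id t).mul_const ⟪gf a, v⟫_ℝ)).fun_sub
      (((hasDerivAt_pow 2 t).const_mul (K / 2 : ℝ)).mul_const (‖v‖ ^ 2))).congr_deriv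
      (by simp only [one_mul, Nat.cast_ofNat]; ring)
  have hanti : AntitoneOn φ (Set.Icc 0 1) := by
    refine antitoneOn_of_hasDerivWithinAt_nonpos (convex_Icc 0 1)
      (HasDerivAt.continuousOn fun t _ => hφ t) (fun t _ => (hφ t).hasDerivWithinAt)
      fun t ht => ?_
    rw [interior_Icc] at ht
    have hstep : ⟪gf (a + t • v) - gf a, v⟫_ℝ ≤ K * t * ‖v‖ ^ 2 := calc
      _ ≤ ‖gf (a + t • v) - gf a‖ * ‖v‖ := real_inner_le_norm _ _
      _ ≤ K * ‖t • v‖ * ‖v‖ := by gcongr; simpa using hlip.norm_sub_le (a + t • v) a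
      _ = K * t * ‖v‖ ^ 2 := by rw [norm_smul, Real.norm_of_nonneg ht.1.le]; ring
    rw [inner_sub_left] at hstep
    linarith
  have h10 := hanti (by simp) (by simp) zero_le_one
  simp only [φ, one_smul, zero_smul, add_zero, one_mul, zero_mul, one_pow, ne_eq,
    OfNat.ofNat_ne_zero, not_false_eq_true, zero_pow, mul_zero, sub_zero] at h10
  linarith

theorem ConvexOn.norm_sub_sq_le_bregmanDiv {K : ℝ≥0} (hK : 0 < K) {f : H → ℝ} {gf : H → H}
    (hf : ConvexOn ℝ Set.univ f) (hg : ∀ x, HasGradientAt f (gf x) x)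
    (hlip : LipschitzWith K gf) (x y : H) :
    ‖gf x - gf y‖ ^ 2 ≤ 2 * K * bregmanDiv f gf x y := by
  set u := gf x - gf y
  have hK' : (0 : ℝ) < K := hK
  have hlow := hf.add_inner_le (hg y) (x - (K : ℝ)⁻¹ • u)
  have hup := hlip.le_add_inner_add_sq hg x (-((K : ℝ)⁻¹ • u))
  have hu : ⟪gf x, u⟫_ℝ - ⟪gf y, u⟫_ℝ = ‖u‖ ^ 2 := by
    rw [← inner_sub_left, real_inner_self_eq_norm_sq]
  rw [← sub_eq_add_neg] at hup
  rw [sub_right_comm, inner_sub_right, real_inner_smul_right] at hlow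
  rw [inner_neg_right, real_inner_smul_right, norm_neg, norm_smul,
    Real.norm_of_nonneg (inv_nonneg.2 hK'.le)] at hup
  have key : ‖u‖ ^ 2 / (2 * K) ≤ bregmanDiv f gf x y := by
    unfold bregmanDiv
    have : ‖u‖ ^ 2 / (2 * K) = (K : ℝ)⁻¹ * ‖u‖ ^ 2 - K / 2 * ((K : ℝ)⁻¹ * ‖u‖) ^ 2 := by
      field_simp; ring
    rw [this, ← hu]
    linarith
  rwa [div_le_iff₀ (by positivity), mul_comm] at key

theorem IsMinOn.bregmanDiv_le_sub {F ψ : H → ℝ} {gF : H → H} {z : H}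
    (hmin : IsMinOn (F + ψ) Set.univ z) (hF : HasGradientAt F (gF z) z)
    (hψ : ConvexOn ℝ Set.univ ψ) (y : H) :
    bregmanDiv F gF y z ≤ (F + ψ) y - (F + ψ) z := by
  set φ : ℝ → ℝ := fun t => F (z + t • (y - z)) + t * (ψ y - ψ z)
  have hφmin : IsMinOn φ (Set.Icc 0 1) 0 := fun t ht => by
    have h1 := hψ.apply_add_smul_sub_le z y ht
    have h2 := hmin (Set.mem_univ (z + t • (y - z)))
    simp only [Set.mem_ofPred_eq, Pi.add_apply] at h2
    simp only [Set.mem_ofPred_eq, φ, zero_mul, zero_smul, add_zero]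
    linarith
  have hφ : HasDerivAt φ (⟪gF z, y - z⟫_ℝ + (ψ y - ψ z)) 0 := by
    have hF' : HasGradientAt F (gF z) (z + (0 : ℝ) • (y - z)) := by simpa using hF
    exact (hF'.hasDerivAt_comp_add_smul.fun_add
      ((hasDerivAt_id (0 : ℝ)).mul_const (ψ y - ψ z))).congr_deriv (by simp)
  have := hφmin.nonneg_of_hasDerivAt_Icc zero_lt_one hφ
  simp only [bregmanDiv, Pi.add_apply]
  linarith

end InnerProduct

theorem Fin.sum_pi_succ {α M : Type*} [Fintype α] [AddCommMonoid M] {n : ℕ}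
    (h : (Fin (n + 1) → α) → M) : ∑ σ, h σ = ∑ a, ∑ σ, h (Fin.cons a σ) := by
  rw [← Fintype.sum_prod_type']
  exact (Fintype.sum_equiv (Fin.consEquiv fun _ => α) _ _ fun _ => rfl).symm

section UniformAvg

variable {ι κ M : Type*} [Fintype ι] [Fintype κ] [AddCommGroup M] [Module ℝ M]

noncomputable def uniformAvg (h : ι → M) : M := (Fintype.card ι : ℝ)⁻¹ • ∑ i, h i

theorem uniformAvg_const [Nonempty ι] (c : M) : uniformAvg (fun _ : ι => c) = c := by
  simp [uniformAvg, sum_const, ← Nat.cast_smul_eq_nsmul ℝ, smul_smul]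

theorem uniformAvg_add (h h' : ι → M) :
    uniformAvg (fun i => h i + h' i) = uniformAvg h + uniformAvg h' := by
  simp [uniformAvg, sum_add_distrib, smul_add]

theorem uniformAvg_mul (c : ℝ) (h : ι → ℝ) : uniformAvg (fun i => c * h i) = c * uniformAvg h := by
  simp only [uniformAvg, smul_eq_mul, ← mul_sum]; ring

theorem uniformAvg_mono {h h' : ι → ℝ} (hle : ∀ i, h i ≤ h' i) : uniformAvg h ≤ uniformAvg h' :=
  mul_le_mul_of_nonneg_left (sum_le_sum fun i _ => hle i) (by positivity)

theorem uniformAvg_pi_succ {n : ℕ} (h : (Fin (n + 1) → κ) → M) :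
    uniformAvg h = uniformAvg fun a => uniformAvg fun σ : Fin n → κ => h (Fin.cons a σ) := by
  simp only [uniformAvg, Fin.sum_pi_succ h, ← smul_sum, smul_smul, Fintype.card_fun,
    Fintype.card_fin]
  congr 1
  push_cast
  ring

theorem uniformAvg_fin_fun {m n : ℕ} (h : (Fin n → Fin m) → ℝ) :
    uniformAvg h = 1 / (m : ℝ) ^ n * ∑ σ, h σ := by
  simp [uniformAvg]

end UniformAvg

section Sampling

variable {E : Type*} [NormedAddCommGroup E] [InnerProductSpace ℝ E] {ι : Type*} [Fintype ι]

theorem uniformAvg_inner (h : ι → E) (c : E) :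
    uniformAvg (fun i => ⟪h i, c⟫_ℝ) = ⟪uniformAvg h, c⟫_ℝ := by
  simp [uniformAvg, real_inner_smul_left, sum_inner]

theorem uniformAvg_norm_add_sq [Nonempty ι] (h : ι → E) (c : E) :
    uniformAvg (fun i => ‖h i + c‖ ^ 2)
      = uniformAvg (fun i => ‖h i‖ ^ 2) + 2 * ⟪uniformAvg h, c⟫_ℝ + ‖c‖ ^ 2 := by
  simp only [norm_add_sq_real, uniformAvg_add, uniformAvg_mul, uniformAvg_inner, uniformAvg_const]

variable {α : Type*} [Fintype α] [Nonempty α]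

theorem uniformAvg_sum_apply {n : ℕ} (v : Fin n → α → E) :
    uniformAvg (fun σ : Fin n → α => ∑ τ, v τ (σ τ)) = ∑ τ, uniformAvg (v τ) := by
  induction n with
  | zero => simp [uniformAvg]
  | succ n ih =>
    simp only [uniformAvg_pi_succ, Fin.sum_univ_succ, Fin.cons_zero, Fin.cons_succ,
      uniformAvg_add, uniformAvg_const, ih fun τ => v τ.succ]

theorem uniformAvg_norm_sum_apply_sq_le {n : ℕ} (v : Fin n → α → E) :
    uniformAvg (fun σ : Fin n → α => ‖∑ τ, v τ (σ τ)‖ ^ 2)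
      ≤ ‖∑ τ, uniformAvg (v τ)‖ ^ 2 + ∑ τ, uniformAvg (fun i => ‖v τ i‖ ^ 2) := by
  induction n with
  | zero => simp [uniformAvg]
  | succ n ih =>
    set S : (Fin n → α) → E := fun σ => ∑ τ, v τ.succ (σ τ)
    set μ := ∑ τ : Fin n, uniformAvg (v τ.succ)
    set Q := ∑ τ : Fin n, uniformAvg (fun i => ‖v τ.succ i‖ ^ 2)
    have hS2 : uniformAvg (fun σ => ‖S σ‖ ^ 2) ≤ ‖μ‖ ^ 2 + Q := ih _
    have hS : uniformAvg S = μ := uniformAvg_sum_apply _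
    have inner_step : ∀ a, uniformAvg (fun σ => ‖v 0 a + S σ‖ ^ 2) ≤ ‖v 0 a + μ‖ ^ 2 + Q := by
      intro a
      simp_rw [add_comm (v 0 a)]
      rw [uniformAvg_norm_add_sq, hS, norm_add_sq_real, real_inner_comm]
      linarith
    calc uniformAvg (fun σ : Fin (n + 1) → α => ‖∑ τ, v τ (σ τ)‖ ^ 2)
        = uniformAvg (fun a => uniformAvg (fun σ => ‖v 0 a + S σ‖ ^ 2)) := by
          simp only [uniformAvg_pi_succ, Fin.sum_univ_succ, Fin.cons_zero, Fin.cons_succ, S]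
      _ ≤ uniformAvg (fun a => ‖v 0 a + μ‖ ^ 2 + Q) := uniformAvg_mono inner_step
      _ ≤ ‖uniformAvg (v 0) + μ‖ ^ 2 + (uniformAvg (fun i => ‖v 0 i‖ ^ 2) + Q) := by
          rw [uniformAvg_add, uniformAvg_const, uniformAvg_norm_add_sq, norm_add_sq_real]
          linarith [sq_nonneg ‖uniformAvg (v 0)‖]
      _ = _ := by simp only [Fin.sum_univ_succ, μ, Q]

end Sampling

section FiniteSum

variable {H : Type*} [NormedAddCommGroup H] [InnerProductSpace ℝ H] [CompleteSpace H]
  {m n : ℕ} {f : Fin n → Fin m → H → ℝ} {g : Fin n → Fin m → H → H} {F : H → ℝ} {gF : H → H}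
  {c : ℝ}

theorem gradient_eq_smul_sum (hgrad : ∀ τ i x, HasGradientAt (f τ i) (g τ i x) x)
    (hF : F = c • ∑ τ, ∑ i, f τ i) (hgradF : ∀ x, HasGradientAt F (gF x) x) :
    gF = c • ∑ τ, ∑ i, g τ i := by
  refine funext fun x => (hgradF x).unique ?_
  rw [hF]
  simpa using (HasGradientAt.sum univ fun τ _ => HasGradientAt.sum univ fun i _ =>
    hgrad τ i x).const_smul c

theorem sum_uniformAvg_norm_sub_sq_le (hm : 0 < m) (hn : 0 < n) {L : ℝ} (hL : 0 < L)
    (hconv : ∀ τ i, ConvexOn ℝ Set.univ (f τ i))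
    (hgrad : ∀ τ i x, HasGradientAt (f τ i) (g τ i x) x)
    (hlip : ∀ τ i, LipschitzWith (Real.toNNReal L) (g τ i))
    (hF : F = (1 / ((n : ℝ) * m)) • ∑ τ, ∑ i, f τ i)
    (hgradF : ∀ x, HasGradientAt F (gF x) x) (y z : H) :
    ∑ τ, uniformAvg (fun i => ‖g τ i y - g τ i z‖ ^ 2) ≤ 2 * L * n * bregmanDiv F gF y z := by
  have hco : ∀ τ i, ‖g τ i y - g τ i z‖ ^ 2 ≤ 2 * L * bregmanDiv (f τ i) (g τ i) y z :=
    fun τ i => by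
      simpa [Real.coe_toNNReal L hL.le] using (hconv τ i).norm_sub_sq_le_bregmanDiv
        (Real.toNNReal_pos.2 hL) (hgrad τ i) (hlip τ i) y z
  have hmR : (m : ℝ) ≠ 0 := by positivity
  have hnR : (n : ℝ) ≠ 0 := by positivity
  calc ∑ τ, uniformAvg (fun i => ‖g τ i y - g τ i z‖ ^ 2)
      ≤ ∑ τ, uniformAvg (fun i => 2 * L * bregmanDiv (f τ i) (g τ i) y z) :=
        sum_le_sum fun τ _ => uniformAvg_mono (hco τ)
    _ = 2 * L * n * bregmanDiv F gF y z := by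
        simp only [← mul_sum, gradient_eq_smul_sum hgrad hF hgradF, hF,
          bregmanDiv_smul, bregmanDiv_sum, uniformAvg, Fintype.card_fin, smul_eq_mul]
        field_simp

theorem uniformAvg_norm_smul_sum_sub_sq_le (hm : 0 < m) (hn : 0 < n) {L Lf : ℝ}
    (hL : 0 < L) (hLf : 0 < Lf)
    (hconv : ∀ τ i, ConvexOn ℝ Set.univ (f τ i))
    (hgrad : ∀ τ i x, HasGradientAt (f τ i) (g τ i x) x)
    (hlip : ∀ τ i, LipschitzWith (Real.toNNReal L) (g τ i))
    (hF : F = (1 / ((n : ℝ) * m)) • ∑ τ, ∑ i, f τ i)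
    (hgradF : ∀ x, HasGradientAt F (gF x) x) (hlipF : LipschitzWith (Real.toNNReal Lf) gF)
    (y z : H) :
    uniformAvg (fun σ : Fin n → Fin m => ‖(1 / (n : ℝ)) • ∑ τ, (g τ (σ τ) y - g τ (σ τ) z)‖ ^ 2)
      ≤ 2 * (Lf + L / n) * bregmanDiv F gF y z := by
  have : Nonempty (Fin m) := ⟨⟨0, hm⟩⟩
  have hFconv : ConvexOn ℝ Set.univ F := by
    rw [hF]
    exact (convexOn_sum convex_univ univ fun τ _ => convexOn_sum convex_univ univ fun i _ =>
      hconv τ i).smul (by positivity)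
  have hmean : ∑ τ, uniformAvg (fun i => g τ i y - g τ i z) = (n : ℝ) • (gF y - gF z) := by
    simp only [uniformAvg, Fintype.card_fin, ← smul_sum, sum_sub_distrib,
      gradient_eq_smul_sum hgrad hF hgradF, Pi.smul_apply, Finset.sum_apply, ← smul_sub,
      smul_smul]
    congr 1
    field_simp
  have hcoF : ‖gF y - gF z‖ ^ 2 ≤ 2 * Lf * bregmanDiv F gF y z := by
    simpa [Real.coe_toNNReal Lf hLf.le] using
      hFconv.norm_sub_sq_le_bregmanDiv (Real.toNNReal_pos.2 hLf) hgradF hlipF y z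
  have hvar := sum_uniformAvg_norm_sub_sq_le hm hn hL hconv hgrad hlip hF hgradF y z
  have hnR : (0 : ℝ) < n := by exact_mod_cast hn
  calc uniformAvg (fun σ : Fin n → Fin m =>
        ‖(1 / (n : ℝ)) • ∑ τ, (g τ (σ τ) y - g τ (σ τ) z)‖ ^ 2)
      = (1 / (n : ℝ)) ^ 2 * uniformAvg (fun σ : Fin n → Fin m =>
          ‖∑ τ, (g τ (σ τ) y - g τ (σ τ) z)‖ ^ 2) := by
        simp only [norm_smul, mul_pow, Real.norm_of_nonneg (by positivity : (0 : ℝ) ≤ 1 / n),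
          uniformAvg_mul]
    _ ≤ (1 / (n : ℝ)) ^ 2 * (‖(n : ℝ) • (gF y - gF z)‖ ^ 2 + 2 * L * n * bregmanDiv F gF y z) := by
        gcongr
        rw [← hmean]
        exact (uniformAvg_norm_sum_apply_sq_le fun τ i => g τ i y - g τ i z).trans (by gcongr)
    _ ≤ 2 * (Lf + L / n) * bregmanDiv F gF y z := by
        rw [norm_smul, mul_pow, Real.norm_of_nonneg hnR.le]
        field_simp
        nlinarith [hcoF]

end FiniteSum

/-- If additionally `f` is `L_f`-smooth, the expected squared norm of the averaged
stochastic gradient difference (expectation over independent uniform indices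
`σ : Fin n → Fin m`) is bounded by `4(L_f + L/n)[P(x)−P(x*)] + 4(L_f + L/n)[P(w)−P(x*)]`. -/
theorem expected_sq_avg_grad_diff_bound {d m n : ℕ} (hm : 0 < m) (hn : 0 < n)
    (L Lf : ℝ) (hL : 0 < L) (hLf : 0 < Lf)
    (f : Fin n → Fin m → EuclideanSpace ℝ (Fin d) → ℝ)
    (g : Fin n → Fin m → EuclideanSpace ℝ (Fin d) → EuclideanSpace ℝ (Fin d))
    (hconv : ∀ τ i, ConvexOn ℝ Set.univ (f τ i))
    (hgrad : ∀ τ i x, HasGradientAt (f τ i) (g τ i x) x)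
    (hlip : ∀ τ i, LipschitzWith (Real.toNNReal L) (g τ i))
    (F : EuclideanSpace ℝ (Fin d) → ℝ)
    (hF : ∀ y, F y = (1 / ((n : ℝ) * m)) * ∑ τ, ∑ i, f τ i y)
    (gF : EuclideanSpace ℝ (Fin d) → EuclideanSpace ℝ (Fin d))
    (hgradF : ∀ x, HasGradientAt F (gF x) x)
    (hlipF : LipschitzWith (Real.toNNReal Lf) gF)
    (ψ : EuclideanSpace ℝ (Fin d) → ℝ) (hψ : ConvexOn ℝ Set.univ ψ)
    (P : EuclideanSpace ℝ (Fin d) → ℝ) (hP : ∀ y, P y = F y + ψ y)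
    (xstar : EuclideanSpace ℝ (Fin d)) (hmin : ∀ y, P xstar ≤ P y)
    (xk wk : EuclideanSpace ℝ (Fin d)) :
    (1 / (m : ℝ) ^ n) * ∑ σ : Fin n → Fin m,
        ‖(1 / (n : ℝ)) • ∑ τ, (g τ (σ τ) xk - g τ (σ τ) wk)‖ ^ 2 ≤
      4 * (Lf + L / n) * (P xk - P xstar) + 4 * (Lf + L / n) * (P wk - P xstar) := by
  have hFfun : F = (1 / ((n : ℝ) * m)) • ∑ τ, ∑ i, f τ i := funext fun y => by simp [hF]
  have hopt : ∀ y, bregmanDiv F gF y xstar ≤ P y - P xstar := fun y => by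
    have hmin' : IsMinOn (F + ψ) Set.univ xstar := fun y _ => by simpa [hP] using hmin y
    simpa [hP] using hmin'.bregmanDiv_le_sub (hgradF xstar) hψ y
  have hbound : ∀ y, uniformAvg (fun σ : Fin n → Fin m =>
      ‖(1 / (n : ℝ)) • ∑ τ, (g τ (σ τ) y - g τ (σ τ) xstar)‖ ^ 2)
        ≤ 2 * (Lf + L / n) * (P y - P xstar) := fun y =>
    (uniformAvg_norm_smul_sum_sub_sq_le hm hn hL hLf hconv hgrad hlip hFfun hgradF hlipF y
      xstar).trans (by gcongr; exact hopt y)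
  have hsplit : ∀ σ : Fin n → Fin m, ‖(1 / (n : ℝ)) • ∑ τ, (g τ (σ τ) xk - g τ (σ τ) wk)‖ ^ 2
      ≤ 2 * ‖(1 / (n : ℝ)) • ∑ τ, (g τ (σ τ) xk - g τ (σ τ) xstar)‖ ^ 2
        + 2 * ‖(1 / (n : ℝ)) • ∑ τ, (g τ (σ τ) wk - g τ (σ τ) xstar)‖ ^ 2 := fun σ => by
    simpa only [smul_sub, sum_sub_distrib] using norm_sub_sq_le_two_mul_add_two_mul
      ((1 / (n : ℝ)) • ∑ τ, g τ (σ τ) xk) ((1 / (n : ℝ)) • ∑ τ, g τ (σ τ) wk)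
      ((1 / (n : ℝ)) • ∑ τ, g τ (σ τ) xstar)
  rw [← uniformAvg_fin_fun]
  calc _ ≤ _ := uniformAvg_mono hsplit
    _ = _ := by rw [uniformAvg_add, uniformAvg_mul, uniformAvg_mul]
    _ ≤ _ := by linarith [hbound xk, hbound wk]
end

section
/- Let Q be a contraction compressor with parameter δ ∈ (0,1]: E‖Q(y) − y‖² ≤ (1−δ)‖y‖². Then for any e ∈ ℝ^d and any random vector g with E[g] = ḡ, where the compressor randomness is independent of g, the error-recursion quantity satisfies E‖e + ηg − Q(e+ηg)‖² ≤ (1 − δ/2)‖e‖² + (2(1−δ)/δ)η²‖ḡ‖² + (1−δ)η² E‖g − ḡ‖². -/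
open MeasureTheory
open scoped RealInnerProductSpace

lemma young_norm {E : Type*} [NormedAddCommGroup E] [InnerProductSpace ℝ E]
    (u v : E) {β : ℝ} (hβ : 0 < β) :
    ‖u + v‖ ^ 2 ≤ (1 + β) * ‖u‖ ^ 2 + (1 + β⁻¹) * ‖v‖ ^ 2 := by
  have h := norm_add_sq_real u v
  have hcs : ⟪u, v⟫ ≤ ‖u‖ * ‖v‖ := real_inner_le_norm u v
  have h2 : 2 * (‖u‖ * ‖v‖) ≤ β * ‖u‖ ^ 2 + β⁻¹ * ‖v‖ ^ 2 := by
    have key : β * (β * ‖u‖ ^ 2 + β⁻¹ * ‖v‖ ^ 2 - 2 * (‖u‖ * ‖v‖))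
        = (β * ‖u‖ - ‖v‖) ^ 2 := by field_simp; ring
    nlinarith [sq_nonneg (β * ‖u‖ - ‖v‖)]
  nlinarith

/-- Error-recursion bound for a contraction compressor applied to `e + ηg`, where `g`
is a random vector with mean `ḡ` independent of the compressor randomness. -/
theorem error_recursion_bound {d : ℕ} {Ω Ω' : Type*}
    [MeasurableSpace Ω] [MeasurableSpace Ω']
    (μ : Measure Ω) (μ' : Measure Ω')
    [IsProbabilityMeasure μ] [IsProbabilityMeasure μ']
    (Q : Ω → EuclideanSpace ℝ (Fin d) → EuclideanSpace ℝ (Fin d))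
    (δ : ℝ) (hδ0 : 0 < δ) (hδ1 : δ ≤ 1)
    (hQ : ∀ y, (∫ ω, ‖Q ω y - y‖ ^ 2 ∂μ) ≤ (1 - δ) * ‖y‖ ^ 2)
    (g : Ω' → EuclideanSpace ℝ (Fin d)) (gbar : EuclideanSpace ℝ (Fin d))
    (hgint : Integrable g μ')
    (hgsq : Integrable (fun ω' => ‖g ω' - gbar‖ ^ 2) μ')
    (hmean : (∫ ω', g ω' ∂μ') = gbar)
    (e : EuclideanSpace ℝ (Fin d)) (η : ℝ)
    (hint : Integrable (fun p : Ω × Ω' =>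
      ‖e + η • g p.2 - Q p.1 (e + η • g p.2)‖ ^ 2) (μ.prod μ')) :
    (∫ p : Ω × Ω', ‖e + η • g p.2 - Q p.1 (e + η • g p.2)‖ ^ 2 ∂(μ.prod μ')) ≤
      (1 - δ / 2) * ‖e‖ ^ 2 + (2 * (1 - δ) / δ) * η ^ 2 * ‖gbar‖ ^ 2 +
        (1 - δ) * η ^ 2 * ∫ ω', ‖g ω' - gbar‖ ^ 2 ∂μ' := by
  set a := e + η • gbar with ha
  set V := ∫ ω', ‖g ω' - gbar‖ ^ 2 ∂μ' with hV
  have hδ' : (0:ℝ) ≤ 1 - δ := by linarith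
  -- swap to iterated integral
  have hswap : (∫ p : Ω × Ω', ‖e + η • g p.2 - Q p.1 (e + η • g p.2)‖ ^ 2 ∂(μ.prod μ'))
      = ∫ ω', ∫ ω, ‖e + η • g ω' - Q ω (e + η • g ω')‖ ^ 2 ∂μ ∂μ' :=
    integral_prod_symm _ hint
  -- pointwise decomposition of ‖e + η g‖²
  have hdecomp : ∀ ω', ‖e + η • g ω'‖ ^ 2
      = ‖a‖ ^ 2 + 2 * ⟪a, η • (g ω' - gbar)⟫ + η ^ 2 * ‖g ω' - gbar‖ ^ 2 := by
    intro ω'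
    have hx : e + η • g ω' = a + η • (g ω' - gbar) := by
      rw [ha, smul_sub]; abel
    rw [hx, norm_add_sq_real, norm_smul, mul_pow]
    simp [sq_abs]
  have hsm : Integrable (fun ω' => η • (g ω' - gbar)) μ' :=
    ((hgint.sub (integrable_const _)).smul η)
  have hinner_int : Integrable (fun ω' => 2 * ⟪a, η • (g ω' - gbar)⟫) μ' :=
    (hsm.const_inner a).const_mul 2
  have hsq_int : Integrable (fun ω' => ‖e + η • g ω'‖ ^ 2) μ' := by
    have : Integrable (fun ω' => ‖a‖ ^ 2 + 2 * ⟪a, η • (g ω' - gbar)⟫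
        + η ^ 2 * ‖g ω' - gbar‖ ^ 2) μ' :=
      ((integrable_const _).add hinner_int).add (hgsq.const_mul (η ^ 2))
    exact this.congr (Filter.Eventually.of_forall fun ω' => (hdecomp ω').symm)
  -- integral of the square
  have hmean0 : (∫ ω', η • (g ω' - gbar) ∂μ') = 0 := by
    rw [integral_smul, integral_sub hgint (integrable_const _), hmean,
      integral_const]
    simp
  have hbv : (∫ ω', ‖e + η • g ω'‖ ^ 2 ∂μ') = ‖a‖ ^ 2 + η ^ 2 * V := by
    calc (∫ ω', ‖e + η • g ω'‖ ^ 2 ∂μ')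
        = ∫ ω', ((‖a‖ ^ 2 + 2 * ⟪a, η • (g ω' - gbar)⟫)
            + η ^ 2 * ‖g ω' - gbar‖ ^ 2) ∂μ' :=
          integral_congr_ae (Filter.Eventually.of_forall fun ω' => hdecomp ω')
      _ = (∫ ω', (‖a‖ ^ 2 + 2 * ⟪a, η • (g ω' - gbar)⟫) ∂μ')
            + ∫ ω', η ^ 2 * ‖g ω' - gbar‖ ^ 2 ∂μ' :=
          integral_add ((integrable_const _).add hinner_int) (hgsq.const_mul _)
      _ = ((∫ _ω' : Ω', (‖a‖ ^ 2 : ℝ) ∂μ')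
            + 2 * ∫ ω', ⟪a, η • (g ω' - gbar)⟫ ∂μ') + η ^ 2 * V := by
          rw [integral_add (integrable_const _) hinner_int, integral_const_mul,
            integral_const_mul]
      _ = ‖a‖ ^ 2 + 2 * ⟪a, ∫ ω', η • (g ω' - gbar) ∂μ'⟫ + η ^ 2 * V := by
          rw [integral_const, integral_inner hsm a]
          simp
      _ = ‖a‖ ^ 2 + η ^ 2 * V := by rw [hmean0]; simp
  -- main chain
  have hstep : (∫ p : Ω × Ω', ‖e + η • g p.2 - Q p.1 (e + η • g p.2)‖ ^ 2 ∂(μ.prod μ'))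
      ≤ (1 - δ) * (‖a‖ ^ 2 + η ^ 2 * V) := by
    rw [hswap, ← hbv, ← integral_const_mul]
    apply integral_mono_of_nonneg
    · exact Filter.Eventually.of_forall fun ω' =>
        integral_nonneg fun ω => by positivity
    · exact hsq_int.const_mul _
    · refine Filter.Eventually.of_forall fun ω' => ?_
      calc (∫ ω, ‖e + η • g ω' - Q ω (e + η • g ω')‖ ^ 2 ∂μ)
          = ∫ ω, ‖Q ω (e + η • g ω') - (e + η • g ω')‖ ^ 2 ∂μ := by
            simp_rw [norm_sub_rev]
        _ ≤ (1 - δ) * ‖e + η • g ω'‖ ^ 2 := hQ _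
  -- scalar inequality
  have hsc : (1 - δ) * ‖a‖ ^ 2 ≤ (1 - δ / 2) * ‖e‖ ^ 2
      + (2 * (1 - δ) / δ) * η ^ 2 * ‖gbar‖ ^ 2 := by
    have hna : ‖η • gbar‖ ^ 2 = η ^ 2 * ‖gbar‖ ^ 2 := by
      rw [norm_smul, mul_pow, Real.norm_eq_abs, sq_abs]
    rcases eq_or_lt_of_le hδ1 with h1 | h1
    · have hz : (1:ℝ) - δ = 0 := by linarith
      have h12 : (1:ℝ) - δ / 2 = 1/2 := by linarith
      rw [hz, h12, zero_mul]
      have hz2 : 2 * (0:ℝ) / δ * η ^ 2 * ‖gbar‖ ^ 2 = 0 := by ring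
      rw [hz2, add_zero]
      positivity
    · have hβ : (0:ℝ) < δ / (2 * (1 - δ)) := by
        apply div_pos hδ0; linarith
      have hy := young_norm e (η • gbar) hβ
      rw [hna] at hy
      have hy' : (1 - δ) * ‖a‖ ^ 2 ≤ (1 - δ) * ((1 + δ / (2 * (1 - δ))) * ‖e‖ ^ 2
          + (1 + (δ / (2 * (1 - δ)))⁻¹) * (η ^ 2 * ‖gbar‖ ^ 2)) := by
        apply mul_le_mul_of_nonneg_left _ hδ'
        rw [ha]; exact hy
      refine hy'.trans ?_
      have h1δ : (0:ℝ) < 1 - δ := by linarith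
      have e1 : (1 - δ) * (1 + δ / (2 * (1 - δ))) = 1 - δ / 2 := by
        field_simp; ring
      have hδne : δ ≠ 0 := ne_of_gt hδ0
      have e2 : (1 - δ) * (1 + (δ / (2 * (1 - δ)))⁻¹) ≤ 2 * (1 - δ) / δ := by
        rw [inv_div, ← sub_nonneg]
        have hid : 2 * (1 - δ) / δ - (1 - δ) * (1 + 2 * (1 - δ) / δ) = 1 - δ := by
          field_simp
          ring
        rw [hid]; linarith
      have hx : (0:ℝ) ≤ η ^ 2 * ‖gbar‖ ^ 2 := by positivity
      nlinarith [mul_le_mul_of_nonneg_right e2 hx, sq_nonneg ‖e‖]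
  have hVnn : 0 ≤ V := integral_nonneg fun ω' => by positivity
  calc _ ≤ (1 - δ) * (‖a‖ ^ 2 + η ^ 2 * V) := hstep
    _ = (1 - δ) * ‖a‖ ^ 2 + (1 - δ) * η ^ 2 * V := by ring
    _ ≤ _ := by linarith
end

section
/- (ESO for independent per-node uniform sampling.) Let A_{iτ} ∈ ℝ^{d×t} for i ∈ [m], τ ∈ [n], N = mn, R_m = max_{i,τ}‖A_{iτ}‖, R̄² = max_τ (1/m)λ_max(∑_{i=1}^m A_{iτ}A_{iτ}ᵀ), R² = (1/N)λ_max(∑_{τ,i} A_{iτ}A_{iτ}ᵀ). Sample, for each node τ independently, an index i^τ uniform on [m], and let S = {(i^τ, τ) : τ ∈ [n]}. Then for every h = (h_{iτ})_{i∈[m],τ∈[n]} with h_{iτ} ∈ ℝ^t, E[‖∑_{(i,τ)∈S} A_{iτ} h_{iτ}‖²] ≤ (1/m)(R_m² + nR²) ∑_{τ=1}^n ∑_{i=1}^m ‖h_{iτ}‖². -/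
/-!
Write `v τ i = A τ i (h τ i)`. Averaged over the sampling `σ`, the cross terms
`⟪v τ (σ τ), v τ' (σ τ')⟫` with `τ ≠ τ'` factor into `⟪𝔼 v τ, 𝔼 v τ'⟫` because `σ τ` and `σ τ'`
are independent. Hence the second moment is `(1/m) ∑ ‖v‖²` plus
`(1/m²) (‖∑ v‖² - ∑_τ ‖∑_i v τ i‖²)`: the first term is at most `(1/m) R_m² ∑ ‖h‖²` by the
operator-norm bound, and the second at most `(1/m) n R² ∑ ‖h‖²` by the defining bound of `R`.
-/

open Finset

open scoped BigOperators RealInnerProductSpace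

section InnerProduct

variable {ι α E : Type*} [Fintype α] [NormedAddCommGroup E] [InnerProductSpace ℝ E]

lemma norm_sum_sq_eq_sum_sum_inner (s : Finset ι) (x : ι → E) :
    ‖∑ i ∈ s, x i‖ ^ 2 = ∑ i ∈ s, ∑ j ∈ s, ⟪x i, x j⟫ := by
  simp_rw [← real_inner_self_eq_norm_sq, sum_inner, inner_sum]

lemma expect_expect_inner (x y : α → E) :
    𝔼 a, 𝔼 b, ⟪x a, y b⟫ = ⟪∑ a, x a, ∑ b, y b⟫ / Fintype.card α ^ 2 := by
  simp_rw [Fintype.expect_eq_sum_div_card, ← sum_div, sum_inner, inner_sum, div_div, sq]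

end InnerProduct

section UniformSampling

variable {ι α M : Type*} [Fintype ι] [DecidableEq ι] [Fintype α]
  [AddCommMonoid M] [Module ℚ≥0 M]

lemma expect_pi_eq_expect_funSplitAt (τ : ι) (F : (ι → α) → M) :
    𝔼 σ, F σ = 𝔼 a, 𝔼 ρ : {j // j ≠ τ} → α, F ((Equiv.funSplitAt τ α).symm (a, ρ)) := by
  rw [Fintype.expect_equiv (Equiv.funSplitAt τ α) _ (fun p ↦ F ((Equiv.funSplitAt τ α).symm p))
    (fun σ ↦ by rw [Equiv.symm_apply_apply]), ← univ_product_univ]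
  exact expect_product' univ univ fun a ρ ↦ F ((Equiv.funSplitAt τ α).symm (a, ρ))

lemma expect_pi_comp_eval (τ : ι) (g : α → M) : 𝔼 σ : ι → α, g (σ τ) = 𝔼 a, g a := by
  rw [expect_pi_eq_expect_funSplitAt τ]
  cases isEmpty_or_nonempty α
  · simp [univ_eq_empty]
  · simp [Equiv.funSplitAt_symm_apply]

lemma expect_pi_comp_eval₂ {τ τ' : ι} (hτ : τ ≠ τ') (f : α → α → M) :
    𝔼 σ : ι → α, f (σ τ) (σ τ') = 𝔼 a, 𝔼 b, f a b := by
  rw [expect_pi_eq_expect_funSplitAt τ]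
  refine expect_congr rfl fun a _ ↦ ?_
  simpa [Equiv.funSplitAt_symm_apply, hτ.symm] using
    expect_pi_comp_eval (⟨τ', hτ.symm⟩ : {j // j ≠ τ}) (f a)

end UniformSampling

section SecondMoment

variable {ι α E : Type*} [Fintype ι] [DecidableEq ι] [Fintype α]
  [NormedAddCommGroup E] [InnerProductSpace ℝ E]

lemma expect_inner_comp_eval (w : ι → α → E) (τ τ' : ι) :
    𝔼 σ : ι → α, ⟪w τ (σ τ), w τ' (σ τ')⟫ =
      ⟪∑ a, w τ a, ∑ a, w τ' a⟫ / Fintype.card α ^ 2 +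
        if τ = τ' then (∑ a, ‖w τ a‖ ^ 2) / Fintype.card α - ‖∑ a, w τ a‖ ^ 2 / Fintype.card α ^ 2
        else 0 := by
  rcases eq_or_ne τ τ' with rfl | hτ
  · rw [expect_pi_comp_eval τ fun a ↦ ⟪w τ a, w τ a⟫, if_pos rfl]
    simp_rw [real_inner_self_eq_norm_sq, Fintype.expect_eq_sum_div_card]
    ring
  · rw [expect_pi_comp_eval₂ hτ fun a b ↦ ⟪w τ a, w τ' b⟫, expect_expect_inner, if_neg hτ,
      add_zero]

/-- The second moment of `∑ τ, w τ (σ τ)` when each row `τ` contributes one uniformly and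
independently sampled entry `σ τ`. -/
theorem expect_norm_sq_sum_comp_eval (w : ι → α → E) :
    𝔼 σ : ι → α, ‖∑ τ, w τ (σ τ)‖ ^ 2 =
      (∑ τ, ∑ a, ‖w τ a‖ ^ 2) / Fintype.card α +
        (‖∑ τ, ∑ a, w τ a‖ ^ 2 - ∑ τ, ‖∑ a, w τ a‖ ^ 2) / Fintype.card α ^ 2 := by
  calc 𝔼 σ : ι → α, ‖∑ τ, w τ (σ τ)‖ ^ 2
        = ∑ τ, ∑ τ', 𝔼 σ : ι → α, ⟪w τ (σ τ), w τ' (σ τ')⟫ := by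
        simp_rw [norm_sum_sq_eq_sum_sum_inner, expect_sum_comm]
    _ = _ := by
        simp_rw [expect_inner_comp_eval, sum_add_distrib, sum_ite_eq, if_pos (mem_univ _),
          ← sum_div, ← norm_sum_sq_eq_sum_sum_inner, sum_sub_distrib, ← sum_div]
        ring

end SecondMoment

lemma ContinuousLinearMap.norm_apply_sq_le_of_opNorm_le {E F : Type*} [SeminormedAddCommGroup E]
    [SeminormedAddCommGroup F] [NormedSpace ℝ E] [NormedSpace ℝ F] (f : E →L[ℝ] F) {C : ℝ}
    (hf : ‖f‖ ≤ C) (x : E) : ‖f x‖ ^ 2 ≤ C ^ 2 * ‖x‖ ^ 2 := by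
  rw [← mul_pow]
  exact pow_le_pow_left₀ (norm_nonneg _) (f.le_of_opNorm_le hf x) 2

/-- ESO for independent per-node uniform sampling:
`E‖∑_{(i,τ)∈S} A_{iτ} h_{iτ}‖² ≤ (1/m)(R_m² + nR²) ∑_{τ,i} ‖h_{iτ}‖²`,
where the expectation averages over all `σ : Fin n → Fin m` (independent uniform
indices per node). -/
theorem eso_independent_uniform_sampling {d t m n : ℕ} (hm : 0 < m)
    (A : Fin n → Fin m → (EuclideanSpace ℝ (Fin t) →L[ℝ] EuclideanSpace ℝ (Fin d)))
    (Rm R : ℝ)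
    (hRm : ∀ τ i, ‖A τ i‖ ≤ Rm)
    (hR : ∀ h : Fin n → Fin m → EuclideanSpace ℝ (Fin t),
      ‖∑ τ, ∑ i, A τ i (h τ i)‖ ^ 2 ≤ ((m : ℝ) * n) * R ^ 2 * ∑ τ, ∑ i, ‖h τ i‖ ^ 2)
    (h : Fin n → Fin m → EuclideanSpace ℝ (Fin t)) :
    (1 / (m : ℝ) ^ n) * ∑ σ : Fin n → Fin m, ‖∑ τ, A τ (σ τ) (h τ (σ τ))‖ ^ 2 ≤
      (1 / (m : ℝ)) * (Rm ^ 2 + n * R ^ 2) * ∑ τ, ∑ i, ‖h τ i‖ ^ 2 := by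
  have hdiag : ∑ τ, ∑ i, ‖A τ i (h τ i)‖ ^ 2 ≤ Rm ^ 2 * ∑ τ, ∑ i, ‖h τ i‖ ^ 2 := by
    simp_rw [mul_sum]
    exact sum_le_sum fun τ _ ↦ sum_le_sum fun i _ ↦
      (A τ i).norm_apply_sq_le_of_opNorm_le (hRm τ i) (h τ i)
  have hcross : ‖∑ τ, ∑ i, A τ i (h τ i)‖ ^ 2 - ∑ τ, ‖∑ i, A τ i (h τ i)‖ ^ 2 ≤
      ((m : ℝ) * n) * R ^ 2 * ∑ τ, ∑ i, ‖h τ i‖ ^ 2 :=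
    (sub_le_self _ (by positivity)).trans (hR h)
  have hm' : (m : ℝ) ≠ 0 := by positivity
  calc (1 / (m : ℝ) ^ n) * ∑ σ : Fin n → Fin m, ‖∑ τ, A τ (σ τ) (h τ (σ τ))‖ ^ 2
      = 𝔼 σ : Fin n → Fin m, ‖∑ τ, A τ (σ τ) (h τ (σ τ))‖ ^ 2 := by
        rw [Fintype.expect_eq_sum_div_card, Fintype.card_fun, Fintype.card_fin, Fintype.card_fin,
          Nat.cast_pow, one_div_mul_eq_div]
    _ = (∑ τ, ∑ i, ‖A τ i (h τ i)‖ ^ 2) / m +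
          (‖∑ τ, ∑ i, A τ i (h τ i)‖ ^ 2 - ∑ τ, ‖∑ i, A τ i (h τ i)‖ ^ 2) / m ^ 2 := by
        simpa only [Fintype.card_fin] using
          expect_norm_sq_sum_comp_eval fun τ i ↦ A τ i (h τ i)
    _ ≤ Rm ^ 2 * (∑ τ, ∑ i, ‖h τ i‖ ^ 2) / m +
          ((m : ℝ) * n) * R ^ 2 * (∑ τ, ∑ i, ‖h τ i‖ ^ 2) / m ^ 2 := by
        gcongr
    _ = (1 / (m : ℝ)) * (Rm ^ 2 + n * R ^ 2) * ∑ τ, ∑ i, ‖h τ i‖ ^ 2 := by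
        field_simp
end

section
/- Under the ESO sampling of the previous statement, the exact decomposition E[‖∑_{(i,τ)∈S} A_{iτ}h_{iτ}‖²] = (1/m²)‖Ah‖² − (1/m²)∑_{τ=1}^n ‖∑_{i=1}^m A_{iτ}h_{iτ}‖² + (1/m)∑_{τ=1}^n ∑_{i=1}^m ‖A_{iτ}h_{iτ}‖² holds, where A = [A_{11},…,A_{mn}] ∈ ℝ^{d×tN} and Ah = ∑_{τ,i} A_{iτ}h_{iτ}. -/
open Finset
open scoped RealInnerProductSpace

lemma sum_eval {ι β : Type*} [Fintype ι] [DecidableEq ι] [Fintype β] (τ : ι) (f : β → ℝ) :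
    ∑ σ : ι → β, f (σ τ) =
      (Fintype.card β : ℝ) ^ (Fintype.card ι - 1) * ∑ i, f i := by
  rw [← Equiv.sum_comp (Equiv.funSplitAt τ β).symm (fun σ => f (σ τ))]
  simp only [Equiv.funSplitAt_symm_apply, dif_pos rfl]
  rw [Fintype.sum_prod_type_right]
  simp [mul_comm, Fintype.card_fun, Fintype.card_subtype_compl]

lemma sum_eval2 {ι β : Type*} [Fintype ι] [DecidableEq ι] [Fintype β] {τ τ' : ι}
    (hne : τ' ≠ τ) (f : β → β → ℝ) :
    ∑ σ : ι → β, f (σ τ) (σ τ') =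
      (Fintype.card β : ℝ) ^ (Fintype.card ι - 2) * ∑ i, ∑ j, f i j := by
  rw [← Equiv.sum_comp (Equiv.funSplitAt τ β).symm (fun σ => f (σ τ) (σ τ'))]
  simp only [Equiv.funSplitAt_symm_apply, dif_pos rfl, dif_neg hne, eq_self_iff_true, dite_true]
  rw [Fintype.sum_prod_type]
  have : ∀ i : β, ∑ r : {j // j ≠ τ} → β, f i (r ⟨τ', hne⟩) =
      (Fintype.card β : ℝ) ^ (Fintype.card ι - 1 - 1) * ∑ j, f i j := by
    intro i
    rw [sum_eval (⟨τ', hne⟩ : {j // j ≠ τ}) (f i)]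
    simp [Fintype.card_subtype_compl]
  rw [Finset.sum_congr rfl (fun i _ => this i), ← Finset.mul_sum, Nat.sub_sub]


/-- Exact second-moment decomposition for independent per-node uniform sampling:
`E‖∑_{(i,τ)∈S} A_{iτ}h_{iτ}‖² = (1/m²)‖Ah‖² − (1/m²)∑_τ‖∑_i A_{iτ}h_{iτ}‖²
 + (1/m)∑_{τ,i}‖A_{iτ}h_{iτ}‖²`. -/
theorem eso_exact_decomposition {d t m n : ℕ} (hm : 0 < m)
    (A : Fin n → Fin m → (EuclideanSpace ℝ (Fin t) →L[ℝ] EuclideanSpace ℝ (Fin d)))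
    (h : Fin n → Fin m → EuclideanSpace ℝ (Fin t)) :
    (1 / (m : ℝ) ^ n) * ∑ σ : Fin n → Fin m, ‖∑ τ, A τ (σ τ) (h τ (σ τ))‖ ^ 2 =
      (1 / (m : ℝ) ^ 2) * ‖∑ τ, ∑ i, A τ i (h τ i)‖ ^ 2
      - (1 / (m : ℝ) ^ 2) * ∑ τ, ‖∑ i, A τ i (h τ i)‖ ^ 2
      + (1 / (m : ℝ)) * ∑ τ, ∑ i, ‖A τ i (h τ i)‖ ^ 2 := by
  have hm' : (m : ℝ) ≠ 0 := Nat.cast_ne_zero.mpr hm.ne'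
  set g : Fin n → Fin m → EuclideanSpace ℝ (Fin d) := fun τ i => A τ i (h τ i) with hg
  set s : Fin n → EuclideanSpace ℝ (Fin d) := fun τ => ∑ i, g τ i with hs
  set Q : ℝ := ∑ τ, ∑ i, ‖g τ i‖ ^ 2 with hQ
  set T : ℝ := ∑ τ, ∑ τ' ∈ univ.erase τ, ⟪s τ, s τ'⟫ with hT
  have expand : ∀ (v : Fin n → EuclideanSpace ℝ (Fin d)),
      ‖∑ τ, v τ‖ ^ 2 = ∑ τ, ∑ τ', ⟪v τ, v τ'⟫ := by
    intro v
    rw [← real_inner_self_eq_norm_sq, sum_inner]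
    exact Finset.sum_congr rfl fun τ _ => inner_sum _ _ _
  -- key computation
  have key : ∑ σ : Fin n → Fin m, ‖∑ τ, g τ (σ τ)‖ ^ 2
      = (m : ℝ) ^ (n - 1) * Q + (m : ℝ) ^ (n - 2) * T := by
    calc ∑ σ : Fin n → Fin m, ‖∑ τ, g τ (σ τ)‖ ^ 2
        = ∑ σ : Fin n → Fin m, ∑ τ, ∑ τ', ⟪g τ (σ τ), g τ' (σ τ')⟫ :=
          Finset.sum_congr rfl fun σ _ => expand _
      _ = ∑ τ, ∑ τ', ∑ σ : Fin n → Fin m, ⟪g τ (σ τ), g τ' (σ τ')⟫ := by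
          rw [Finset.sum_comm]
          exact Finset.sum_congr rfl fun τ _ => by rw [Finset.sum_comm]
      _ = ∑ τ, ((m : ℝ) ^ (n - 1) * ∑ i, ‖g τ i‖ ^ 2
            + ∑ τ' ∈ univ.erase τ, (m : ℝ) ^ (n - 2) * ⟪s τ, s τ'⟫) := by
          refine Finset.sum_congr rfl fun τ _ => ?_
          rw [← Finset.add_sum_erase _ _ (mem_univ τ)]
          congr 1
          · rw [sum_eval τ (fun i => ⟪g τ i, g τ i⟫)]
            simp only [Fintype.card_fin]
            congr 1
            exact Finset.sum_congr rfl fun i _ => real_inner_self_eq_norm_sq _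
          · refine Finset.sum_congr rfl fun τ' hτ' => ?_
            rw [sum_eval2 (Finset.ne_of_mem_erase hτ') (fun i j => ⟪g τ i, g τ' j⟫)]
            simp only [Fintype.card_fin]
            congr 1
            rw [hs, sum_inner]
            exact Finset.sum_congr rfl fun i _ => (inner_sum _ _ _).symm
      _ = (m : ℝ) ^ (n - 1) * Q + (m : ℝ) ^ (n - 2) * T := by
          rw [Finset.sum_add_distrib, ← Finset.mul_sum, hQ, hT]
          congr 1
          rw [Finset.mul_sum]
          exact Finset.sum_congr rfl fun τ _ => (Finset.mul_sum _ _ _).symm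
  have hPD : ‖∑ τ, s τ‖ ^ 2 - ∑ τ, ‖s τ‖ ^ 2 = T := by
    rw [expand, hT]
    rw [← Finset.sum_sub_distrib]
    refine Finset.sum_congr rfl fun τ _ => ?_
    rw [← Finset.add_sum_erase _ _ (mem_univ τ), real_inner_self_eq_norm_sq]
    ring
  show (1 / (m : ℝ) ^ n) * ∑ σ : Fin n → Fin m, ‖∑ τ, g τ (σ τ)‖ ^ 2
      = (1 / (m : ℝ) ^ 2) * ‖∑ τ, s τ‖ ^ 2 - (1 / (m : ℝ) ^ 2) * ∑ τ, ‖s τ‖ ^ 2 + (1 / (m : ℝ)) * Q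
  rw [key, ← mul_sub, hPD]
  rcases Nat.lt_or_ge n 2 with hn | hn
  · have hT0 : T = 0 := by
      rw [hT]
      refine Finset.sum_eq_zero fun τ _ => Finset.sum_eq_zero fun τ' hτ' => ?_
      have h1 := τ'.isLt
      have h2 := τ.isLt
      exact absurd (Fin.ext (by omega : (τ' : ℕ) = τ)) (Finset.ne_of_mem_erase hτ')
    have : n = 0 ∨ n = 1 := by omega
    rcases this with rfl | rfl
    · have hQ0 : Q = 0 := by rw [hQ]; simp
      simp [hT0, hQ0]
    · rw [hT0]
      norm_num
  · rw [pow_sub₀ _ hm' (by omega : 1 ≤ n), pow_sub₀ _ hm' hn]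
    field_simp
    ring
end

section
/- Let Q be a contraction compressor with parameter δ satisfying additionally E[Q(y)] = δy for all y. Let e_1,…,e_n, g_1,…,g_n ∈ ℝ^d, apply Q independently to each e_τ + g_τ, and set e_τ⁺ = e_τ + g_τ − Q(e_τ + g_τ), e = (1/n)∑_τ e_τ, e⁺ = (1/n)∑_τ e_τ⁺. Then E‖e⁺‖² ≤ (1−δ)‖e + (1/n)∑_τ g_τ‖² + ((1−δ)δ/n²)∑_{τ=1}^n ‖e_τ + g_τ‖². -/
open MeasureTheory Finset ProbabilityTheory
open scoped RealInnerProductSpace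

/-!
Write `y_τ = e_τ + g_τ` and `X_τ = y_τ - Q(ω_τ, y_τ)`. The `X_τ` are independent, so the second
moment of their sum is the squared norm of the sum of their means plus the sum of their variances.
By unbiasedness the means add up to `E[S - Q S]` with `S = ∑ y_τ`, whose squared norm is at most
`(1 - δ)‖S‖²` by Jensen and the contraction property at `S`; each variance is
`E‖X_τ‖² - (1 - δ)²‖y_τ‖² ≤ (1 - δ)δ‖y_τ‖²`.
-/

theorem MeasureTheory.MemLp.integrable_inner {α E : Type*} [MeasurableSpace α] {μ : Measure α}
    [NormedAddCommGroup E] [InnerProductSpace ℝ E] {f g : α → E} (hf : MemLp f 2 μ)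
    (hg : MemLp g 2 μ) : Integrable (fun x => ⟪f x, g x⟫) μ :=
  (L2.integrable_inner (𝕜 := ℝ) (hf.toLp f) (hg.toLp g)).congr <| by
    filter_upwards [hf.coeFn_toLp, hg.coeFn_toLp] with x hfx hgx
    rw [hfx, hgx]

theorem norm_integral_sq_le_integral_norm_sq {α E : Type*} [MeasurableSpace α] {μ : Measure α}
    [IsProbabilityMeasure μ] [NormedAddCommGroup E] [InnerProductSpace ℝ E] [CompleteSpace E]
    {f : α → E} (hf : MemLp f 2 μ) : ‖∫ x, f x ∂μ‖ ^ 2 ≤ ∫ x, ‖f x‖ ^ 2 ∂μ :=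
  (convexOn_univ_norm.pow (fun _ _ => norm_nonneg _) 2).map_integral_le
    (by fun_prop) isClosed_univ (by simp) (hf.integrable one_le_two)
    ((memLp_two_iff_integrable_sq_norm hf.1).1 hf)

section Pi

variable {ι : Type*} [Fintype ι] {Ω : ι → Type*} [∀ i, MeasurableSpace (Ω i)]
  {μ : ∀ i, Measure (Ω i)} [∀ i, IsProbabilityMeasure (μ i)]
  {E : Type*} [NormedAddCommGroup E] [InnerProductSpace ℝ E]
  {X : ∀ i, Ω i → E}

theorem integral_inner_pi_of_ne [CompleteSpace E] {i j : ι} (hij : i ≠ j)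
    (hi : Integrable (X i) (μ i)) (hj : Integrable (X j) (μ j)) :
    ∫ ω, ⟪X i (ω i), X j (ω j)⟫ ∂Measure.pi μ = ⟪∫ x, X i x ∂μ i, ∫ x, X j x ∂μ j⟫ := by
  have hind : (fun ω : ∀ k, Ω k => ω i) ⟂ᵢ[Measure.pi μ] fun ω => ω j :=
    (iIndepFun_pi (X := fun _ => id) fun _ => aemeasurable_id).indepFun hij
  have := hind.integral_bilin_comp_comp (measurable_pi_apply i).aemeasurable
      (measurable_pi_apply j).aemeasurable ((measurePreserving_eval μ i).map_eq ▸ hi)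
      ((measurePreserving_eval μ j).map_eq ▸ hj) (innerSL ℝ)
  rwa [integral_comp_eval hi.1, integral_comp_eval hj.1] at this

theorem integrable_inner_pi (hX : ∀ i, MemLp (X i) 2 (μ i)) (i j : ι) :
    Integrable (fun ω => ⟪X i (ω i), X j (ω j)⟫) (Measure.pi μ) :=
  ((hX i).comp_measurePreserving (measurePreserving_eval μ i)).integrable_inner
    ((hX j).comp_measurePreserving (measurePreserving_eval μ j))

theorem integral_inner_pi [CompleteSpace E] [DecidableEq ι] (hX : ∀ i, MemLp (X i) 2 (μ i))
    (i j : ι) :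
    ∫ ω, ⟪X i (ω i), X j (ω j)⟫ ∂Measure.pi μ =
      ⟪∫ x, X i x ∂μ i, ∫ x, X j x ∂μ j⟫ +
        if i = j then ∫ x, ‖X i x‖ ^ 2 ∂μ i - ‖∫ x, X i x ∂μ i‖ ^ 2 else 0 := by
  by_cases hij : i = j
  · subst hij
    simp only [real_inner_self_eq_norm_sq, if_true]
    rw [integral_comp_eval (f := fun x => ‖X i x‖ ^ 2) ((hX i).1.norm.pow 2)]
    ring
  · rw [integral_inner_pi_of_ne hij ((hX i).integrable one_le_two)
      ((hX j).integrable one_le_two), if_neg hij, add_zero]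

theorem integral_norm_sum_pi_sq [CompleteSpace E] (hX : ∀ i, MemLp (X i) 2 (μ i)) :
    ∫ ω, ‖∑ i, X i (ω i)‖ ^ 2 ∂Measure.pi μ =
      ‖∑ i, ∫ x, X i x ∂μ i‖ ^ 2 + ∑ i, (∫ x, ‖X i x‖ ^ 2 ∂μ i - ‖∫ x, X i x ∂μ i‖ ^ 2) := by
  classical
  simp_rw [← real_inner_self_eq_norm_sq, sum_inner, inner_sum]
  rw [integral_finsetSum _ fun i _ => integrable_finsetSum _ fun j _ =>
    integrable_inner_pi hX i j]
  simp_rw [integral_finsetSum _ fun j _ => integrable_inner_pi hX _ j, integral_inner_pi hX,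
    sum_add_distrib, sum_ite_eq, mem_univ, if_true, real_inner_self_eq_norm_sq]

end Pi

section Compressor

variable {Ω E : Type*} [MeasurableSpace Ω] {μ : Measure Ω} [IsProbabilityMeasure μ]
  [NormedAddCommGroup E] {Q : Ω → E → E} {δ : ℝ} {y : E}

theorem memLp_two_sub_apply (hint : Integrable (fun ω => Q ω y) μ)
    (hint2 : Integrable (fun ω => ‖Q ω y‖ ^ 2) μ) : MemLp (fun ω => y - Q ω y) 2 μ :=
  (memLp_const y).sub ((memLp_two_iff_integrable_sq_norm hint.1).2 hint2)

theorem integral_sub_apply_eq_smul [NormedSpace ℝ E] [CompleteSpace E]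
    (hlin : ∫ ω, Q ω y ∂μ = δ • y) (hint : Integrable (fun ω => Q ω y) μ) :
    ∫ ω, (y - Q ω y) ∂μ = (1 - δ) • y := by
  rw [integral_sub (integrable_const y) hint, integral_const, hlin, probReal_univ, one_smul,
    sub_smul, one_smul]

theorem norm_integral_sub_apply_sq_le [InnerProductSpace ℝ E] [CompleteSpace E]
    (hcontract : ∫ ω, ‖Q ω y - y‖ ^ 2 ∂μ ≤ (1 - δ) * ‖y‖ ^ 2)
    (hint : Integrable (fun ω => Q ω y) μ) (hint2 : Integrable (fun ω => ‖Q ω y‖ ^ 2) μ) :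
    ‖∫ ω, (y - Q ω y) ∂μ‖ ^ 2 ≤ (1 - δ) * ‖y‖ ^ 2 := by
  refine (norm_integral_sq_le_integral_norm_sq (memLp_two_sub_apply hint hint2)).trans ?_
  simpa only [norm_sub_rev] using hcontract

theorem integral_norm_sub_apply_sq_sub_le [NormedSpace ℝ E] [CompleteSpace E]
    (hcontract : ∫ ω, ‖Q ω y - y‖ ^ 2 ∂μ ≤ (1 - δ) * ‖y‖ ^ 2)
    (hlin : ∫ ω, Q ω y ∂μ = δ • y) (hint : Integrable (fun ω => Q ω y) μ) :
    ∫ ω, ‖y - Q ω y‖ ^ 2 ∂μ - ‖∫ ω, (y - Q ω y) ∂μ‖ ^ 2 ≤ (1 - δ) * δ * ‖y‖ ^ 2 := by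
  rw [integral_sub_apply_eq_smul hlin hint, norm_smul, mul_pow, Real.norm_eq_abs, sq_abs]
  simp only [norm_sub_rev y]
  linear_combination hcontract

end Compressor

theorem averaged_error_second_moment_general {d n : ℕ} {Ω : Type*} [MeasurableSpace Ω]
    (μ : Measure Ω) [IsProbabilityMeasure μ]
    (Q : Ω → EuclideanSpace ℝ (Fin d) → EuclideanSpace ℝ (Fin d))
    (δ : ℝ)
    (hcontract : ∀ y, (∫ ω, ‖Q ω y - y‖ ^ 2 ∂μ) ≤ (1 - δ) * ‖y‖ ^ 2)
    (hlin : ∀ y, (∫ ω, Q ω y ∂μ) = δ • y)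
    (hint : ∀ y, Integrable (fun ω => Q ω y) μ)
    (hint2 : ∀ y, Integrable (fun ω => ‖Q ω y‖ ^ 2) μ)
    (e g : Fin n → EuclideanSpace ℝ (Fin d)) :
    (∫ ω : Fin n → Ω,
        ‖(1 / (n : ℝ)) • ∑ τ, (e τ + g τ - Q (ω τ) (e τ + g τ))‖ ^ 2
        ∂(Measure.pi fun _ => μ)) ≤
      (1 - δ) * ‖(1 / (n : ℝ)) • ∑ τ, e τ + (1 / (n : ℝ)) • ∑ τ, g τ‖ ^ 2 +
        ((1 - δ) * δ / (n : ℝ) ^ 2) * ∑ τ, ‖e τ + g τ‖ ^ 2 := by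
  set y := fun τ => e τ + g τ
  set S := ∑ τ, y τ
  have hmean : ∑ τ, ∫ ω, (y τ - Q ω (y τ)) ∂μ = ∫ ω, (S - Q ω S) ∂μ := by
    simp only [integral_sub_apply_eq_smul (hlin _) (hint _), ← smul_sum]
    rfl
  calc (∫ ω : Fin n → Ω, ‖(1 / (n : ℝ)) • ∑ τ, (y τ - Q (ω τ) (y τ))‖ ^ 2
        ∂(Measure.pi fun _ => μ))
      = (1 / (n : ℝ)) ^ 2 * (‖∑ τ, ∫ ω, (y τ - Q ω (y τ)) ∂μ‖ ^ 2 +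
          ∑ τ, (∫ ω, ‖y τ - Q ω (y τ)‖ ^ 2 ∂μ - ‖∫ ω, (y τ - Q ω (y τ)) ∂μ‖ ^ 2)) := by
        simp only [norm_smul, mul_pow, Real.norm_eq_abs, sq_abs, integral_const_mul]
        rw [integral_norm_sum_pi_sq fun τ => memLp_two_sub_apply (hint _) (hint2 _)]
    _ ≤ (1 / (n : ℝ)) ^ 2 * ((1 - δ) * ‖S‖ ^ 2 + ∑ τ, (1 - δ) * δ * ‖y τ‖ ^ 2) := by
        rw [hmean]
        gcongr with τ
        · exact norm_integral_sub_apply_sq_le (hcontract S) (hint S) (hint2 S)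
        · exact integral_norm_sub_apply_sq_sub_le (hcontract _) (hlin _) (hint _)
    _ = _ := by
        rw [← smul_add, ← sum_add_distrib, norm_smul, mul_pow, Real.norm_eq_abs, sq_abs,
          ← mul_sum]
        ring

/-- Bound on the second moment of the averaged compression error, when a contraction
compressor `Q` with `E[Q(y)] = δy` is applied independently on each of the `n` nodes
to `e_τ + g_τ`. -/
theorem averaged_error_second_moment {d n : ℕ} {Ω : Type*} [MeasurableSpace Ω]
    (μ : Measure Ω) [IsProbabilityMeasure μ]
    (Q : Ω → EuclideanSpace ℝ (Fin d) → EuclideanSpace ℝ (Fin d))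
    (δ : ℝ) (hδ0 : 0 < δ) (hδ1 : δ ≤ 1)
    (hcontract : ∀ y, (∫ ω, ‖Q ω y - y‖ ^ 2 ∂μ) ≤ (1 - δ) * ‖y‖ ^ 2)
    (hlin : ∀ y, (∫ ω, Q ω y ∂μ) = δ • y)
    (hint : ∀ y, Integrable (fun ω => Q ω y) μ)
    (hint2 : ∀ y, Integrable (fun ω => ‖Q ω y‖ ^ 2) μ)
    (hn : 0 < n)
    (e g : Fin n → EuclideanSpace ℝ (Fin d)) :
    (∫ ω : Fin n → Ω,
        ‖(1 / (n : ℝ)) • ∑ τ, (e τ + g τ - Q (ω τ) (e τ + g τ))‖ ^ 2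
        ∂(Measure.pi fun _ => μ)) ≤
      (1 - δ) * ‖(1 / (n : ℝ)) • ∑ τ, e τ + (1 / (n : ℝ)) • ∑ τ, g τ‖ ^ 2 +
        ((1 - δ) * δ / (n : ℝ) ^ 2) * ∑ τ, ‖e τ + g τ‖ ^ 2 :=
  averaged_error_second_moment_general μ Q δ hcontract hlin hint hint2 e g
end

section
/- (Learning-rate recursion for the reference-gradient estimator.) Let Q₁ be a contraction compressor with parameter δ₁, let h, v, v' ∈ ℝ^d, let h⁺ = h + Q₁(v − h), and suppose the target switches to v' with probability p (otherwise stays v). Then for any p ∈ (0,1], E‖h⁺ − (target)‖² ≤ (1 − δ₁/2)‖h − v‖² + p(1 + 2p/δ₁)‖v' − v‖², where (target) equals v' with probability p and v with probability 1−p, independently of Q₁'s randomness. -/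
/-!
Write `e = h⁺ − v`, so that `h⁺ − v' = e + (v − v')`. By Young's inequality with weight `ε`,
`‖e + (v − v')‖² ≤ (1 + ε)‖e‖² + (1 + 1/ε)‖v' − v‖²`; the choice `ε = δ₁/(2p)` makes the
`p`-weighted mixture at most `(1 + δ₁/2)E‖e‖² + p(1 + 2p/δ₁)‖v' − v‖²`. The contraction property
gives `E‖e‖² ≤ (1 − δ₁)‖h − v‖²`, and `(1 + δ₁/2)(1 − δ₁) ≤ 1 − δ₁/2`.
-/

open MeasureTheory

theorem add_sq_le_one_add_mul_sq_add {a b ε : ℝ} (hε : 0 < ε) :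
    (a + b) ^ 2 ≤ (1 + ε) * a ^ 2 + (1 + ε⁻¹) * b ^ 2 := by
  have key : 0 ≤ (ε * a - b) ^ 2 / ε := by positivity
  have expand : (1 + ε) * a ^ 2 + (1 + ε⁻¹) * b ^ 2 - (a + b) ^ 2 = (ε * a - b) ^ 2 / ε := by
    field_simp
    ring
  linarith

theorem norm_add_sq_le_one_add_mul {E : Type*} [SeminormedAddGroup E] (x y : E) {ε : ℝ}
    (hε : 0 < ε) : ‖x + y‖ ^ 2 ≤ (1 + ε) * ‖x‖ ^ 2 + (1 + ε⁻¹) * ‖y‖ ^ 2 :=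
  (pow_le_pow_left₀ (norm_nonneg _) (norm_add_le x y) 2).trans
    (add_sq_le_one_add_mul_sq_add hε)

section SwitchingTarget

variable {Ω E : Type*} [MeasurableSpace Ω] {μ : Measure Ω} [IsProbabilityMeasure μ]
  [SeminormedAddGroup E] {X : Ω → E}

theorem integral_norm_add_const_sq_le (hX : Integrable (fun ω => ‖X ω‖ ^ 2) μ) (c : E)
    {ε : ℝ} (hε : 0 < ε) :
    ∫ ω, ‖X ω + c‖ ^ 2 ∂μ ≤ (1 + ε) * (∫ ω, ‖X ω‖ ^ 2 ∂μ) + (1 + ε⁻¹) * ‖c‖ ^ 2 := by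
  calc ∫ ω, ‖X ω + c‖ ^ 2 ∂μ
      ≤ ∫ ω, ((1 + ε) * ‖X ω‖ ^ 2 + (1 + ε⁻¹) * ‖c‖ ^ 2) ∂μ :=
        integral_mono_of_nonneg (ae_of_all _ fun _ => by positivity)
          ((hX.const_mul _).add (integrable_const _))
          (ae_of_all _ fun ω => norm_add_sq_le_one_add_mul (X ω) c hε)
    _ = (1 + ε) * (∫ ω, ‖X ω‖ ^ 2 ∂μ) + (1 + ε⁻¹) * ‖c‖ ^ 2 := by
        rw [integral_add (hX.const_mul _) (integrable_const _), integral_const_mul,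
          integral_const, probReal_univ, one_smul]

theorem mix_integral_norm_add_const_sq_le (hX : Integrable (fun ω => ‖X ω‖ ^ 2) μ) (c : E)
    {p δ : ℝ} (hp : 0 < p) (hδ : 0 < δ) :
    p * (∫ ω, ‖X ω + c‖ ^ 2 ∂μ) + (1 - p) * (∫ ω, ‖X ω‖ ^ 2 ∂μ) ≤
      (1 + δ / 2) * (∫ ω, ‖X ω‖ ^ 2 ∂μ) + p * (1 + 2 * p / δ) * ‖c‖ ^ 2 := by
  have hε : 0 < δ / (2 * p) := by positivity
  have young := integral_norm_add_const_sq_le hX c hε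
  calc p * (∫ ω, ‖X ω + c‖ ^ 2 ∂μ) + (1 - p) * (∫ ω, ‖X ω‖ ^ 2 ∂μ)
      ≤ p * ((1 + δ / (2 * p)) * (∫ ω, ‖X ω‖ ^ 2 ∂μ) + (1 + (δ / (2 * p))⁻¹) * ‖c‖ ^ 2) +
          (1 - p) * (∫ ω, ‖X ω‖ ^ 2 ∂μ) := by gcongr
    _ = (1 + δ / 2) * (∫ ω, ‖X ω‖ ^ 2 ∂μ) + p * (1 + 2 * p / δ) * ‖c‖ ^ 2 := by
        field_simp
        ring

end SwitchingTarget

theorem reference_gradient_recursion_general {d : ℕ} {Ω : Type*} [MeasurableSpace Ω]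
    (μ : Measure Ω) [IsProbabilityMeasure μ]
    (Q : Ω → EuclideanSpace ℝ (Fin d) → EuclideanSpace ℝ (Fin d))
    (δ₁ : ℝ) (hδ0 : 0 < δ₁)
    (hQ : ∀ y, (∫ ω, ‖Q ω y - y‖ ^ 2 ∂μ) ≤ (1 - δ₁) * ‖y‖ ^ 2)
    (p : ℝ) (hp0 : 0 < p)
    (h v v' : EuclideanSpace ℝ (Fin d))
    (hint2 : Integrable (fun ω => ‖h + Q ω (v - h) - v‖ ^ 2) μ) :
    p * (∫ ω, ‖h + Q ω (v - h) - v'‖ ^ 2 ∂μ) +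
        (1 - p) * (∫ ω, ‖h + Q ω (v - h) - v‖ ^ 2 ∂μ) ≤
      (1 - δ₁ / 2) * ‖h - v‖ ^ 2 + p * (1 + 2 * p / δ₁) * ‖v' - v‖ ^ 2 := by
  have mix := mix_integral_norm_add_const_sq_le hint2 (v - v') hp0 hδ0
  have contraction : ∫ ω, ‖h + Q ω (v - h) - v‖ ^ 2 ∂μ ≤ (1 - δ₁) * ‖h - v‖ ^ 2 := by
    have error_eq : ∀ ω, h + Q ω (v - h) - v = Q ω (v - h) - (v - h) := fun ω => by abel
    simpa only [error_eq, norm_sub_rev v h] using hQ (v - h)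
  simp only [sub_add_sub_cancel, norm_sub_rev v v'] at mix
  calc _ ≤ _ := mix
    _ ≤ (1 + δ₁ / 2) * ((1 - δ₁) * ‖h - v‖ ^ 2) + p * (1 + 2 * p / δ₁) * ‖v' - v‖ ^ 2 := by
        gcongr
    _ ≤ (1 - δ₁ / 2) * ‖h - v‖ ^ 2 + p * (1 + 2 * p / δ₁) * ‖v' - v‖ ^ 2 := by
        nlinarith [mul_nonneg (sq_nonneg δ₁) (sq_nonneg ‖h - v‖)]

/-- Learning-rate recursion for the reference-gradient estimator: with
`h⁺ = h + Q₁(v − h)` and target switching to `v'` with probability `p`,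
`E‖h⁺ − target‖² ≤ (1 − δ₁/2)‖h − v‖² + p(1 + 2p/δ₁)‖v' − v‖²`. -/
theorem reference_gradient_recursion {d : ℕ} {Ω : Type*} [MeasurableSpace Ω]
    (μ : Measure Ω) [IsProbabilityMeasure μ]
    (Q : Ω → EuclideanSpace ℝ (Fin d) → EuclideanSpace ℝ (Fin d))
    (δ₁ : ℝ) (hδ0 : 0 < δ₁) (hδ1 : δ₁ ≤ 1)
    (hQ : ∀ y, (∫ ω, ‖Q ω y - y‖ ^ 2 ∂μ) ≤ (1 - δ₁) * ‖y‖ ^ 2)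
    (p : ℝ) (hp0 : 0 < p) (hp1 : p ≤ 1)
    (h v v' : EuclideanSpace ℝ (Fin d))
    (hint : Integrable (fun ω => ‖h + Q ω (v - h) - v'‖ ^ 2) μ)
    (hint2 : Integrable (fun ω => ‖h + Q ω (v - h) - v‖ ^ 2) μ) :
    p * (∫ ω, ‖h + Q ω (v - h) - v'‖ ^ 2 ∂μ) +
        (1 - p) * (∫ ω, ‖h + Q ω (v - h) - v‖ ^ 2 ∂μ) ≤
      (1 - δ₁ / 2) * ‖h - v‖ ^ 2 + p * (1 + 2 * p / δ₁) * ‖v' - v‖ ^ 2 :=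
  reference_gradient_recursion_general μ Q δ₁ hδ0 hQ p hp0 h v v' hint2
end

section
/- Let f: ℝ^d → ℝ be convex and L_f-smooth, ψ: ℝ^d → ℝ ∪ {+∞} proper closed μ-strongly convex (μ ≥ 0), P = f + ψ, and x* any point. Consider one proximal step x⁺ = prox_{ηψ}(x̃ − η(G)) interpreted via x̃⁺ = x̃ − η(G + s) with s ∈ ∂ψ(x⁺), where G is a random vector with E[G] = ∇f(x). If η ≤ 1/(4L_f), then (1 + ημ/2)E‖x̃⁺ − x*‖² ≤ ‖x̃ − x*‖² + 2η E[P(x*) − P(x⁺)] + ‖x̃ − x‖² + (1+ημ)E‖x̃⁺ − x⁺‖² + 4η² E‖G − ∇f(x)‖². -/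
open MeasureTheory
open scoped InnerProductSpace

/-!
Expanding `‖x̃ - η(G + s) - x*‖²` around `x⁺` (three-point identity) leaves the cross term
`-2η⟪G + s, x⁺ - x*⟫`. Writing `G = ∇f(x) + (G - ∇f(x))`, convexity and `L`-smoothness of `f`
and `μ`-strong convexity of `ψ` bound the `∇f(x) + s` part by
`P(x*) - P(x⁺) - (μ/2)‖x⁺ - x*‖² + (L/2)‖x⁺ - x‖²`; the noise paired with `x⁺ - x` is handled by
Young's inequality, and the noise paired with `x - x*` has mean zero. Since `ηL ≤ 1/4`, the
`‖x⁺ - x‖²` terms are absorbed by `-‖x̃ - x⁺‖²` and `‖x̃ - x‖²`, and the `μ`-term becomes the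
factor `1 + ημ/2` via `‖x̃⁺ - x*‖² ≤ 2‖x⁺ - x*‖² + 2‖x̃⁺ - x⁺‖²`.
-/

theorem norm_sub_sq_le_two_mul {E : Type*} [SeminormedAddCommGroup E] (a b c : E) :
    ‖a - c‖ ^ 2 ≤ 2 * (‖a - b‖ ^ 2 + ‖b - c‖ ^ 2) :=
  (pow_le_pow_left₀ (norm_nonneg _) (norm_sub_le_norm_sub_add_norm_sub a b c) 2).trans add_sq_le

section RealInnerProductSpace

variable {E : Type*} [NormedAddCommGroup E] [InnerProductSpace ℝ E]

theorem norm_sub_sub_sq_three_point (xt v a z : E) :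
    ‖(xt - v) - z‖ ^ 2 =
      ‖xt - z‖ ^ 2 - 2 * ⟪v, a - z⟫_ℝ + ‖(xt - v) - a‖ ^ 2 - ‖xt - a‖ ^ 2 := by
  rw [show (xt - v) - z = (xt - z) - v by abel, show (xt - v) - a = (xt - a) - v by abel,
    show a - z = (xt - z) - (xt - a) by abel, norm_sub_sq_real, norm_sub_sq_real (xt - a) v,
    inner_sub_right, real_inner_comm (xt - z) v, real_inner_comm (xt - a) v]
  ring

variable [CompleteSpace E]

theorem HasGradientAt.hasDerivAt_comp_smul_add {f : E → ℝ} {g a v : E} {t : ℝ}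
    (h : HasGradientAt f g (t • v + a)) :
    HasDerivAt (fun t : ℝ => f (t • v + a)) ⟪g, v⟫_ℝ t := by
  have hline : HasDerivAt (fun t : ℝ => t • v + a) v t := by
    simpa using ((hasDerivAt_id t).smul_const v).add_const a
  have := h.hasFDerivAt.comp_hasDerivAt t hline
  simp only [InnerProductSpace.toDual_apply_apply] at this
  exact this

theorem ConvexOn.inner_le_sub_of_hasGradientAt {f : E → ℝ} {g a : E}
    (hf : ConvexOn ℝ Set.univ f) (h : HasGradientAt f g a) (b : E) :
    ⟪g, b - a⟫_ℝ ≤ f b - f a := by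
  have hline : ConvexOn ℝ Set.univ fun t : ℝ => f (t • (b - a) + a) := by
    simpa [Function.comp_def, AffineMap.lineMap_apply] using
      hf.comp_affineMap (AffineMap.lineMap a b : ℝ →ᵃ[ℝ] E)
  have hderiv : HasDerivAt (fun t : ℝ => f (t • (b - a) + a)) ⟪g, b - a⟫_ℝ 0 :=
    HasGradientAt.hasDerivAt_comp_smul_add (by simpa using h)
  simpa [slope_def_field] using
    hline.le_slope_of_hasDerivAt (Set.mem_univ 0) (Set.mem_univ 1) one_pos hderiv

theorem le_add_inner_add_sq_of_lipschitzWith_gradient {f : E → ℝ} {g : E → E} {K : NNReal}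
    (hf : ∀ y, HasGradientAt f (g y) y) (hg : LipschitzWith K g) (a b : E) :
    f b ≤ f a + ⟪g a, b - a⟫_ℝ + K / 2 * ‖b - a‖ ^ 2 := by
  set v := b - a
  set φ : ℝ → ℝ := fun t => f (t • v + a) - t * ⟪g a, v⟫_ℝ - K * ‖v‖ ^ 2 / 2 * t ^ 2
  have hφ : ∀ t, HasDerivAt φ (⟪g (t • v + a) - g a, v⟫_ℝ - K * ‖v‖ ^ 2 * t) t := by
    intro t
    have := (((hf (t • v + a)).hasDerivAt_comp_smul_add).sub
      ((hasDerivAt_id t).mul_const ⟪g a, v⟫_ℝ)).sub ((hasDerivAt_pow 2 t).const_mul (K * ‖v‖ ^ 2 / 2))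
    exact this.congr_deriv (by rw [inner_sub_left]; ring)
  have hanti : AntitoneOn φ (Set.Icc 0 1) := by
    refine antitoneOn_of_hasDerivWithinAt_nonpos (convex_Icc 0 1)
      (fun t _ => (hφ t).continuousAt.continuousWithinAt)
      (fun t _ => (hφ t).hasDerivWithinAt) fun t ht => ?_
    rw [interior_Icc] at ht
    have hlip : ‖g (t • v + a) - g a‖ ≤ K * (t * ‖v‖) := by
      simpa [← dist_eq_norm, norm_smul, abs_of_pos ht.1] using hg.dist_le_mul (t • v + a) a
    have := (real_inner_le_norm _ v).trans (mul_le_mul_of_nonneg_right hlip (norm_nonneg v))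
    nlinarith
  have hend : φ 1 ≤ φ 0 :=
    hanti (Set.left_mem_Icc.mpr zero_le_one) (Set.right_mem_Icc.mpr zero_le_one) zero_le_one
  simp only [φ, v, one_smul, zero_smul, sub_add_cancel, zero_add] at hend
  linarith

theorem add_sub_add_le_of_lipschitzWith_gradient_of_strongConvex {f ψ : E → ℝ} {g : E → E}
    {K : NNReal} {μ : ℝ} (hf : ConvexOn ℝ Set.univ f) (hgrad : ∀ y, HasGradientAt f (g y) y)
    (hg : LipschitzWith K g) {a s : E}
    (hs : ∀ y, ψ a + ⟪s, y - a⟫_ℝ + μ / 2 * ‖y - a‖ ^ 2 ≤ ψ y) (x z : E) :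
    f a + ψ a - (f z + ψ z) ≤ ⟪g x + s, a - z⟫_ℝ - μ / 2 * ‖a - z‖ ^ 2 + K / 2 * ‖a - x‖ ^ 2 := by
  have hfz := hf.inner_le_sub_of_hasGradientAt (hgrad x) z
  have hfa := le_add_inner_add_sq_of_lipschitzWith_gradient hgrad hg x a
  have hψz := hs z
  have hsplit : ⟪g x + s, a - z⟫_ℝ = ⟪g x, a - x⟫_ℝ - ⟪g x, z - x⟫_ℝ - ⟪s, z - a⟫_ℝ := by
    simp only [inner_add_left, inner_sub_right]
    ring
  rw [norm_sub_rev z a] at hψz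
  linarith

theorem prox_step_progress_pointwise {f ψ : E → ℝ} {g : E → E} {K : NNReal} {μ η : ℝ}
    (hf : ConvexOn ℝ Set.univ f) (hgrad : ∀ y, HasGradientAt f (g y) y)
    (hg : LipschitzWith K g) (hμ : 0 ≤ μ) (hη : 0 ≤ η) (hηK : η * K ≤ 1 / 4)
    {x xt xp xtp G s z : E} (hs : ∀ y, ψ xp + ⟪s, y - xp⟫_ℝ + μ / 2 * ‖y - xp‖ ^ 2 ≤ ψ y)
    (hupd : xtp = xt - η • (G + s)) :
    (1 + η * μ / 2) * ‖xtp - z‖ ^ 2 ≤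
      ‖xt - z‖ ^ 2 + 2 * η * (f z + ψ z - (f xp + ψ xp)) + ‖xt - x‖ ^ 2 +
        (1 + η * μ) * ‖xtp - xp‖ ^ 2 + 4 * η ^ 2 * ‖G - g x‖ ^ 2 -
        2 * η * ⟪G - g x, x - z⟫_ℝ := by
  have hthree := norm_sub_sub_sq_three_point xt (η • (G + s)) xp z
  rw [← hupd, real_inner_smul_left] at hthree
  have hsplit : ⟪G + s, xp - z⟫_ℝ =
      ⟪g x + s, xp - z⟫_ℝ + ⟪G - g x, x - z⟫_ℝ + ⟪G - g x, xp - x⟫_ℝ := by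
    simp only [inner_add_left, inner_sub_left, inner_sub_right]
    ring
  rw [hsplit] at hthree
  have hcomp := add_sub_add_le_of_lipschitzWith_gradient_of_strongConvex hf hgrad hg hs x z
  have hyoung : -(2 * η * ⟪G - g x, xp - x⟫_ℝ) ≤
      4 * η ^ 2 * ‖G - g x‖ ^ 2 + 1 / 4 * ‖xp - x‖ ^ 2 := by
    have := (neg_le_abs _).trans (abs_real_inner_le_norm (G - g x) (xp - x))
    nlinarith [sq_nonneg (2 * η * ‖G - g x‖ - ‖xp - x‖ / 2)]
  have hsmooth : η * K * ‖xp - x‖ ^ 2 ≤ 1 / 4 * ‖xp - x‖ ^ 2 :=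
    mul_le_mul_of_nonneg_right hηK (sq_nonneg _)
  have hxp := norm_sub_sq_le_two_mul xp xt x
  have hxtp := norm_sub_sq_le_two_mul xtp xp z
  rw [norm_sub_rev xp xt] at hxp
  have hcomp_scaled := mul_le_mul_of_nonneg_left hcomp (by positivity : 0 ≤ 2 * η)
  have hxtp_scaled := mul_le_mul_of_nonneg_left hxtp (by positivity : 0 ≤ η * μ / 2)
  linarith

section Integral

variable {Ω : Type*} [MeasurableSpace Ω] {P : Measure Ω} [IsProbabilityMeasure P]

theorem integral_inner_sub_integral_eq_zero {G : Ω → E} (hG : Integrable G P) (c : E) :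
    ∫ ω, ⟪G ω - ∫ ω', G ω' ∂P, c⟫_ℝ ∂P = 0 := by
  simp_rw [real_inner_comm c]
  rw [integral_inner (f := fun ω => G ω - ∫ ω', G ω' ∂P) (hG.sub (integrable_const _)),
    integral_sub hG (integrable_const _),
    integral_const, probReal_univ, one_smul, sub_self, inner_zero_right]

end Integral

end RealInnerProductSpace

theorem prox_step_progress_general {d : ℕ} {Ω : Type*} [MeasurableSpace Ω]
    (μmeas : Measure Ω) [IsProbabilityMeasure μmeas]
    (f : EuclideanSpace ℝ (Fin d) → ℝ)
    (gf : EuclideanSpace ℝ (Fin d) → EuclideanSpace ℝ (Fin d))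
    (Lf μ : ℝ) (hμ : 0 ≤ μ)
    (hconv : ConvexOn ℝ Set.univ f)
    (hgrad : ∀ y, HasGradientAt f (gf y) y)
    (hlip : LipschitzWith (Real.toNNReal Lf) gf)
    (ψ : EuclideanSpace ℝ (Fin d) → ℝ)
    (P : EuclideanSpace ℝ (Fin d) → ℝ) (hP : ∀ y, P y = f y + ψ y)
    (xstar x e : EuclideanSpace ℝ (Fin d))
    (η : ℝ) (hη0 : 0 < η) (hη : η ≤ 1 / (4 * Lf))
    (G xp ep s : Ω → EuclideanSpace ℝ (Fin d))
    -- `s ω` is a subgradient of the `μ`-strongly convex `ψ` at `x⁺ ω`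
    (hs : ∀ ω y, ψ (xp ω) + ⟪s ω, y - xp ω⟫_ℝ + (μ / 2) * ‖y - xp ω‖ ^ 2 ≤ ψ y)
    -- the perturbed update: `x̃⁺ = x̃ − η(G + s)` with `x̃ = x − e`, `x̃⁺ = x⁺ − e⁺`
    (hupd : ∀ ω, xp ω - ep ω = (x - e) - η • (G ω + s ω))
    (hGmean : (∫ ω, G ω ∂μmeas) = gf x)
    (hGint : Integrable G μmeas)
    (hint1 : Integrable (fun ω => ‖(xp ω - ep ω) - xstar‖ ^ 2) μmeas)
    (hint2 : Integrable (fun ω => P xstar - P (xp ω)) μmeas)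
    (hint3 : Integrable (fun ω => ‖(xp ω - ep ω) - xp ω‖ ^ 2) μmeas)
    (hint4 : Integrable (fun ω => ‖G ω - gf x‖ ^ 2) μmeas) :
    (1 + η * μ / 2) * (∫ ω, ‖(xp ω - ep ω) - xstar‖ ^ 2 ∂μmeas) ≤
      ‖(x - e) - xstar‖ ^ 2 + 2 * η * (∫ ω, (P xstar - P (xp ω)) ∂μmeas) +
        ‖(x - e) - x‖ ^ 2 +
        (1 + η * μ) * (∫ ω, ‖(xp ω - ep ω) - xp ω‖ ^ 2 ∂μmeas) +
        4 * η ^ 2 * (∫ ω, ‖G ω - gf x‖ ^ 2 ∂μmeas) := by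
  -- `1 / (4 * Lf)` is `0` when `Lf = 0`, so `0 < η` rules out `Lf ≤ 0`
  have hLf : 0 < Lf := by
    have := one_div_pos.mp (hη0.trans_le hη)
    linarith
  have hηL : η * (Lf.toNNReal : ℝ) ≤ 1 / 4 := by
    rw [Real.coe_toNNReal Lf hLf.le]
    have := (le_div_iff₀ (by positivity)).mp hη
    linarith
  have hpt : ∀ ω, (1 + η * μ / 2) * ‖(xp ω - ep ω) - xstar‖ ^ 2 ≤
      ‖(x - e) - xstar‖ ^ 2 + 2 * η * (P xstar - P (xp ω)) + ‖(x - e) - x‖ ^ 2 +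
        (1 + η * μ) * ‖(xp ω - ep ω) - xp ω‖ ^ 2 + 4 * η ^ 2 * ‖G ω - gf x‖ ^ 2 -
        2 * η * ⟪G ω - gf x, x - xstar⟫_ℝ := fun ω => by
    rw [hP, hP]
    exact prox_step_progress_pointwise hconv hgrad hlip hμ hη0.le hηL (hs ω) (hupd ω)
  have hcentered : ∫ ω, ⟪G ω - gf x, x - xstar⟫_ℝ ∂μmeas = 0 :=
    hGmean ▸ integral_inner_sub_integral_eq_zero hGint _
  have hmono := integral_mono (hint1.const_mul _) (by fun_prop) hpt
  simpa (disch := fun_prop) only [integral_add, integral_sub, integral_const_mul, integral_const,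
    probReal_univ, one_smul, hcentered, mul_zero, sub_zero] using hmono

/-- One-step progress bound for the perturbed proximal iteration of EC-LSVRG in the
composite case: for `η ≤ 1/(4L_f)`,
`(1 + ημ/2)E‖x̃⁺ − x*‖² ≤ ‖x̃ − x*‖² + 2ηE[P(x*) − P(x⁺)] + ‖x̃ − x‖²
 + (1+ημ)E‖x̃⁺ − x⁺‖² + 4η²E‖G − ∇f(x)‖²`. -/
theorem prox_step_progress {d : ℕ} {Ω : Type*} [MeasurableSpace Ω]
    (μmeas : Measure Ω) [IsProbabilityMeasure μmeas]
    (f : EuclideanSpace ℝ (Fin d) → ℝ)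
    (gf : EuclideanSpace ℝ (Fin d) → EuclideanSpace ℝ (Fin d))
    (Lf μ : ℝ) (hLf : 0 < Lf) (hμ : 0 ≤ μ)
    (hconv : ConvexOn ℝ Set.univ f)
    (hgrad : ∀ y, HasGradientAt f (gf y) y)
    (hlip : LipschitzWith (Real.toNNReal Lf) gf)
    (ψ : EuclideanSpace ℝ (Fin d) → ℝ)
    (P : EuclideanSpace ℝ (Fin d) → ℝ) (hP : ∀ y, P y = f y + ψ y)
    (xstar x e : EuclideanSpace ℝ (Fin d))
    (η : ℝ) (hη0 : 0 < η) (hη : η ≤ 1 / (4 * Lf))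
    (G xp ep s : Ω → EuclideanSpace ℝ (Fin d))
    -- `s ω` is a subgradient of the `μ`-strongly convex `ψ` at `x⁺ ω`
    (hs : ∀ ω y, ψ (xp ω) + ⟪s ω, y - xp ω⟫_ℝ + (μ / 2) * ‖y - xp ω‖ ^ 2 ≤ ψ y)
    -- the perturbed update: `x̃⁺ = x̃ − η(G + s)` with `x̃ = x − e`, `x̃⁺ = x⁺ − e⁺`
    (hupd : ∀ ω, xp ω - ep ω = (x - e) - η • (G ω + s ω))
    (hGmean : (∫ ω, G ω ∂μmeas) = gf x)
    (hGint : Integrable G μmeas)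
    (hint1 : Integrable (fun ω => ‖(xp ω - ep ω) - xstar‖ ^ 2) μmeas)
    (hint2 : Integrable (fun ω => P xstar - P (xp ω)) μmeas)
    (hint3 : Integrable (fun ω => ‖(xp ω - ep ω) - xp ω‖ ^ 2) μmeas)
    (hint4 : Integrable (fun ω => ‖G ω - gf x‖ ^ 2) μmeas) :
    (1 + η * μ / 2) * (∫ ω, ‖(xp ω - ep ω) - xstar‖ ^ 2 ∂μmeas) ≤
      ‖(x - e) - xstar‖ ^ 2 + 2 * η * (∫ ω, (P xstar - P (xp ω)) ∂μmeas) +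
        ‖(x - e) - x‖ ^ 2 +
        (1 + η * μ) * (∫ ω, ‖(xp ω - ep ω) - xp ω‖ ^ 2 ∂μmeas) +
        4 * η ^ 2 * (∫ ω, ‖G ω - gf x‖ ^ 2 ∂μmeas) :=
  prox_step_progress_general μmeas f gf Lf μ hμ hconv hgrad hlip ψ P hP xstar x e η hη0 hη G xp ep s
    hs hupd hGmean hGint hint1 hint2 hint3 hint4
end

section
/- Let f be μ-strongly convex (μ ≥ 0) and L_f-smooth with ∇f(x*) = 0. Let x̃ = x − e, and let G be a random vector with E[G] = ∇f(x) and E‖G‖² ≤ (2L_f + 4L/n)(f(x) − f(x*)) + (4L/n)(f(w) − f(x*)) for some w ∈ ℝ^d and constants L, n > 0. If x̃⁺ = x̃ − ηG with η ≤ 1/(4L_f + 8L/n), then E‖x̃⁺ − x*‖² ≤ (1 − μη/2)‖x̃ − x*‖² − (η/2)(f(x) − f(x*)) + 3L_f η‖e‖² + (4L/n)η²(f(w) − f(x*)). -/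
open MeasureTheory
open scoped InnerProductSpace NNReal

/-! Strong convexity at `x*`, corrected for the perturbation `e` by Young's inequality and the
smoothness bound `‖∇f x‖² ≤ 2 L_f (f x - f x*)` (a gradient step in the descent lemma), gives
`2⟪x̃ - x*, ∇f x⟫ ≥ f x - f x* + (μ/2)‖x̃ - x*‖² - 3 L_f ‖e‖²`. In the expansion of
`E‖x̃ - ηG - x*‖²` the cross term is exactly this inner product, and the step-size condition
absorbs `η² (2 L_f + 4L/n) (f x - f x*)` into `(η/2) (f x - f x*)`. -/

section Smooth

variable {E : Type*} [NormedAddCommGroup E] [InnerProductSpace ℝ E]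
  {f : E → ℝ} {gf : E → E} {K : ℝ≥0}

theorem descent_lemma [CompleteSpace E] (hgrad : ∀ y, HasGradientAt f (gf y) y)
    (hlip : LipschitzWith K gf) (x y : E) : f y ≤ f x + ⟪gf x, y - x⟫_ℝ + K / 2 * ‖y - x‖ ^ 2 := by
  set v := y - x
  -- `φ` is antitone on `[0, 1]` because `gf` grows at most linearly along the segment.
  let φ : ℝ → ℝ := fun t => f (x + t • v) - t * ⟪gf x, v⟫_ℝ - K / 2 * t ^ 2 * ‖v‖ ^ 2
  have hφ : ∀ t, HasDerivAt φ (⟪gf (x + t • v), v⟫_ℝ - ⟪gf x, v⟫_ℝ - K * t * ‖v‖ ^ 2) t := by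
    intro t
    have hline : HasDerivAt (fun t : ℝ => x + t • v) v t := by
      simpa using ((hasDerivAt_id t).smul_const v).const_add x
    have hf : HasDerivAt (fun t : ℝ => f (x + t • v)) ⟪gf (x + t • v), v⟫_ℝ t :=
      (hgrad (x + t • v)).hasFDerivAt.comp_hasDerivAt (f := fun t : ℝ => x + t • v) t hline
    exact ((hf.sub ((hasDerivAt_id' t).mul_const _)).sub
      (((hasDerivAt_pow 2 t).const_mul (K / 2 : ℝ)).mul_const _)).congr_deriv (by ring)
  have hφ' : ∀ t ∈ Set.Ioo (0 : ℝ) 1,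
      ⟪gf (x + t • v), v⟫_ℝ - ⟪gf x, v⟫_ℝ - K * t * ‖v‖ ^ 2 ≤ 0 := by
    intro t ht
    have hgrowth : ‖gf (x + t • v) - gf x‖ ≤ K * (t * ‖v‖) := by
      simpa [norm_smul, abs_of_pos ht.1] using hlip.norm_sub_le (x + t • v) x
    have := real_inner_le_norm (gf (x + t • v) - gf x) v
    rw [inner_sub_left] at this
    nlinarith [mul_le_mul_of_nonneg_right hgrowth (norm_nonneg v)]
  have hanti : AntitoneOn φ (Set.Icc 0 1) := by
    refine antitoneOn_of_hasDerivWithinAt_nonpos (convex_Icc 0 1)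
      (fun t _ => (hφ t).continuousAt.continuousWithinAt) (fun t _ => (hφ t).hasDerivWithinAt) ?_
    simpa only [interior_Icc] using hφ'
  have hends := hanti (Set.left_mem_Icc.2 zero_le_one) (Set.right_mem_Icc.2 zero_le_one) zero_le_one
  norm_num [φ, v] at hends
  linarith

theorem sq_norm_gradient_le [CompleteSpace E] (hgrad : ∀ y, HasGradientAt f (gf y) y)
    (hlip : LipschitzWith K gf) (hK : 0 < K) {x₀ : E} (hmin : ∀ y, f x₀ ≤ f y) (x : E) :
    ‖gf x‖ ^ 2 ≤ 2 * K * (f x - f x₀) := by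
  have hK' : (0 : ℝ) < K := hK
  have h := descent_lemma hgrad hlip x (x - (1 / (K : ℝ)) • gf x)
  rw [sub_sub_cancel_left, inner_neg_right, norm_neg, real_inner_smul_right,
    real_inner_self_eq_norm_sq, norm_smul, Real.norm_of_nonneg (by positivity)] at h
  have := hmin (x - (1 / (K : ℝ)) • gf x)
  field_simp at h
  nlinarith

def StrongConvexWithGradient (μ : ℝ) (f : E → ℝ) (gf : E → E) : Prop :=
  ∀ x y, f x + ⟪gf x, y - x⟫_ℝ + μ / 2 * ‖y - x‖ ^ 2 ≤ f y

namespace StrongConvexWithGradient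

variable {μ : ℝ} (hsc : StrongConvexWithGradient μ f gf)
include hsc

theorem le_of_gradient_eq_zero (hμ : 0 ≤ μ) {x₀ : E} (h₀ : gf x₀ = 0) (y : E) : f x₀ ≤ f y := by
  have := hsc x₀ y
  rw [h₀, inner_zero_left] at this
  linarith [mul_nonneg hμ (sq_nonneg ‖y - x₀‖)]

theorem mul_sq_norm_le (hlip : LipschitzWith K gf) (x v : E) : μ * ‖v‖ ^ 2 ≤ K * ‖v‖ ^ 2 := by
  have h₁ := hsc x (x + v)
  have h₂ := hsc (x + v) x
  rw [add_sub_cancel_left] at h₁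
  rw [sub_add_cancel_left, inner_neg_right, norm_neg] at h₂
  have hmono : ⟪gf (x + v) - gf x, v⟫_ℝ ≤ K * ‖v‖ ^ 2 := by
    calc ⟪gf (x + v) - gf x, v⟫_ℝ ≤ ‖gf (x + v) - gf x‖ * ‖v‖ := real_inner_le_norm _ _
      _ ≤ K * ‖x + v - x‖ * ‖v‖ := by gcongr; exact hlip.norm_sub_le _ _
      _ = K * ‖v‖ ^ 2 := by rw [add_sub_cancel_left]; ring
  rw [inner_sub_left] at hmono
  linarith

theorem sub_add_half_mul_sq_le_two_inner [CompleteSpace E] (hμ : 0 ≤ μ)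
    (hgrad : ∀ y, HasGradientAt f (gf y) y) (hlip : LipschitzWith K gf) (hK : 0 < K)
    {x₀ : E} (h₀ : gf x₀ = 0) (x e : E) :
    f x - f x₀ + μ / 2 * ‖x - e - x₀‖ ^ 2 ≤ 2 * ⟪x - e - x₀, gf x⟫_ℝ + 3 * K * ‖e‖ ^ 2 := by
  have hx := hsc x x₀
  rw [← neg_sub x x₀, inner_neg_right, norm_neg, real_inner_comm] at hx
  have hgx := sq_norm_gradient_le hgrad hlip hK (hsc.le_of_gradient_eq_zero hμ h₀) x
  -- Young's inequality `2⟪e, g⟫ ≤ 2K‖e‖² + ‖g‖² / (2K)`, with `‖g‖² ≤ 2K (f x - f x₀)`.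
  have hyoung : 2 * ⟪e, gf x⟫_ℝ ≤ 2 * K * ‖e‖ ^ 2 + (f x - f x₀) := by
    have := real_inner_le_norm e (gf x)
    nlinarith [sq_nonneg (2 * K * ‖e‖ - ‖gf x‖)]
  have hsplit : ‖x - x₀ - e‖ ^ 2 ≤ 2 * ‖x - x₀‖ ^ 2 + 2 * ‖e‖ ^ 2 := by
    nlinarith [norm_sub_le (x - x₀) e, norm_nonneg (x - x₀ - e), sq_nonneg (‖x - x₀‖ - ‖e‖)]
  have hμK := hsc.mul_sq_norm_le hlip x e
  rw [sub_right_comm, inner_sub_left]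
  linarith [mul_le_mul_of_nonneg_left hsplit hμ]

end StrongConvexWithGradient

theorem integral_norm_sub_smul_sq [CompleteSpace E] {Ω : Type*} [MeasurableSpace Ω]
    {P : Measure Ω} [IsProbabilityMeasure P] {G : Ω → E} (hG : Integrable G P)
    (hG2 : Integrable (fun ω => ‖G ω‖ ^ 2) P) (a : E) (η : ℝ) :
    ∫ ω, ‖a - η • G ω‖ ^ 2 ∂P =
      ‖a‖ ^ 2 - 2 * η * ⟪a, ∫ ω, G ω ∂P⟫_ℝ + η ^ 2 * ∫ ω, ‖G ω‖ ^ 2 ∂P := by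
  have hexpand (ω : Ω) :
      ‖a - η • G ω‖ ^ 2 = ‖a‖ ^ 2 - 2 * η * ⟪a, G ω⟫_ℝ + η ^ 2 * ‖G ω‖ ^ 2 := by
    rw [norm_sub_sq_real, real_inner_smul_right, norm_smul, mul_pow, Real.norm_eq_abs, sq_abs]
    ring
  have hinner : Integrable (fun ω => ⟪a, G ω⟫_ℝ) P := (innerSL ℝ a).integrable_comp hG
  have hlin : Integrable (fun ω => ‖a‖ ^ 2 - 2 * η * ⟪a, G ω⟫_ℝ) P :=
    (integrable_const _).sub (hinner.const_mul _)
  simp_rw [hexpand]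
  rw [integral_add hlin (hG2.const_mul _), integral_sub (integrable_const _) (hinner.const_mul _),
    integral_const, integral_const_mul, integral_const_mul, integral_inner hG]
  simp

end Smooth

theorem smooth_step_progress_general {d : ℕ} {Ω : Type*} [MeasurableSpace Ω]
    (μmeas : Measure Ω) [IsProbabilityMeasure μmeas]
    (f : EuclideanSpace ℝ (Fin d) → ℝ)
    (gf : EuclideanSpace ℝ (Fin d) → EuclideanSpace ℝ (Fin d))
    (μ Lf L n : ℝ) (hμ : 0 ≤ μ) (hLf : 0 < Lf)
    -- `μ`-strong convexity of `f` (via the gradient inequality)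
    (hsc : ∀ x y, f x + ⟪gf x, y - x⟫_ℝ + (μ / 2) * ‖y - x‖ ^ 2 ≤ f y)
    (hgrad : ∀ y, HasGradientAt f (gf y) y)
    (hlip : LipschitzWith (Real.toNNReal Lf) gf)
    (xstar : EuclideanSpace ℝ (Fin d)) (hstar : gf xstar = 0)
    (x e w : EuclideanSpace ℝ (Fin d))
    (G : Ω → EuclideanSpace ℝ (Fin d))
    (η : ℝ) (hη0 : 0 < η) (hη : η ≤ 1 / (4 * Lf + 8 * L / n))
    (hGint : Integrable G μmeas)
    (hGsq : Integrable (fun ω => ‖G ω‖ ^ 2) μmeas)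
    (hmean : (∫ ω, G ω ∂μmeas) = gf x)
    (hsec : (∫ ω, ‖G ω‖ ^ 2 ∂μmeas) ≤
      (2 * Lf + 4 * L / n) * (f x - f xstar) + (4 * L / n) * (f w - f xstar)) :
    (∫ ω, ‖(x - e) - η • G ω - xstar‖ ^ 2 ∂μmeas) ≤
      (1 - μ * η / 2) * ‖(x - e) - xstar‖ ^ 2 - (η / 2) * (f x - f xstar) +
        3 * Lf * η * ‖e‖ ^ 2 + (4 * L / n) * η ^ 2 * (f w - f xstar) := by
  have hconv : StrongConvexWithGradient μ f gf := hsc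
  have hkey := hconv.sub_add_half_mul_sq_le_two_inner hμ hgrad hlip
    (Real.toNNReal_pos.2 hLf) hstar x e
  rw [Real.coe_toNNReal _ hLf.le] at hkey
  have hgap : 0 ≤ f x - f xstar := sub_nonneg.2 (hconv.le_of_gradient_eq_zero hμ hstar x)
  have hstep : η * (4 * Lf + 8 * L / n) ≤ 1 := by
    have hden : 0 < 4 * Lf + 8 * L / n := one_div_pos.1 (hη0.trans_le hη)
    rwa [le_div_iff₀ hden] at hη
  have hvar : η ^ 2 * ∫ ω, ‖G ω‖ ^ 2 ∂μmeas ≤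
      η / 2 * (f x - f xstar) + (4 * L / n) * η ^ 2 * (f w - f xstar) := by
    have hsec' := mul_le_mul_of_nonneg_left hsec (sq_nonneg η)
    have hslack := mul_nonneg (mul_nonneg hη0.le hgap) (sub_nonneg.2 hstep)
    linear_combination hsec' + hslack / 2
  have hshift (ω : Ω) : x - e - η • G ω - xstar = x - e - xstar - η • G ω :=
    sub_right_comm _ _ _
  simp_rw [hshift]
  rw [integral_norm_sub_smul_sq hGint hGsq, hmean]
  linear_combination η * hkey + hvar

/-- One-step progress bound for the perturbed iterate in the smooth case: if
`x̃⁺ = x̃ − ηG` with `x̃ = x − e`, `E[G] = ∇f(x)`,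
`E‖G‖² ≤ (2L_f + 4L/n)(f(x) − f(x*)) + (4L/n)(f(w) − f(x*))`, and
`η ≤ 1/(4L_f + 8L/n)`, then
`E‖x̃⁺ − x*‖² ≤ (1 − μη/2)‖x̃ − x*‖² − (η/2)(f(x) − f(x*)) + 3L_f η‖e‖²
 + (4L/n)η²(f(w) − f(x*))`. -/
theorem smooth_step_progress {d : ℕ} {Ω : Type*} [MeasurableSpace Ω]
    (μmeas : Measure Ω) [IsProbabilityMeasure μmeas]
    (f : EuclideanSpace ℝ (Fin d) → ℝ)
    (gf : EuclideanSpace ℝ (Fin d) → EuclideanSpace ℝ (Fin d))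
    (μ Lf L n : ℝ) (hμ : 0 ≤ μ) (hLf : 0 < Lf) (hL : 0 < L) (hn : 0 < n)
    -- `μ`-strong convexity of `f` (via the gradient inequality)
    (hsc : ∀ x y, f x + ⟪gf x, y - x⟫_ℝ + (μ / 2) * ‖y - x‖ ^ 2 ≤ f y)
    (hgrad : ∀ y, HasGradientAt f (gf y) y)
    (hlip : LipschitzWith (Real.toNNReal Lf) gf)
    (xstar : EuclideanSpace ℝ (Fin d)) (hstar : gf xstar = 0)
    (x e w : EuclideanSpace ℝ (Fin d))
    (G : Ω → EuclideanSpace ℝ (Fin d))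
    (η : ℝ) (hη0 : 0 < η) (hη : η ≤ 1 / (4 * Lf + 8 * L / n))
    (hGint : Integrable G μmeas)
    (hGsq : Integrable (fun ω => ‖G ω‖ ^ 2) μmeas)
    (hint : Integrable (fun ω => ‖(x - e) - η • G ω - xstar‖ ^ 2) μmeas)
    (hmean : (∫ ω, G ω ∂μmeas) = gf x)
    (hsec : (∫ ω, ‖G ω‖ ^ 2 ∂μmeas) ≤
      (2 * Lf + 4 * L / n) * (f x - f xstar) + (4 * L / n) * (f w - f xstar)) :
    (∫ ω, ‖(x - e) - η • G ω - xstar‖ ^ 2 ∂μmeas) ≤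
      (1 - μ * η / 2) * ‖(x - e) - xstar‖ ^ 2 - (η / 2) * (f x - f xstar) +
        3 * Lf * η * ‖e‖ ^ 2 + (4 * L / n) * η ^ 2 * (f w - f xstar) :=
  smooth_step_progress_general μmeas f gf μ Lf L n hμ hLf hsc hgrad hlip xstar hstar x e w G η hη0
    hη hGint hGsq hmean hsec
end
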